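/- arXiv:1903.07323 — 14 statements merged into one kernel-verified Lean document; each statement's English description precedes it below -/
import Mathlib

section
/- For every real number x, there exist θ₁, θ₂ ∈ [−π, π] such that 81x⁴ − 54x³ − 45x² + 18x − 8 cos(θ₁/2) cos(θ₂/2) cos((θ₁ − θ₂)/2) + 8 = 0 if and only if x ∈ [−2/3, 0] ∪ [1/3, 1]. -/
open Real

theorem ac_spectrum_truncated_hexagonal (x : ℝ) :
    (∃ θ₁ ∈ Set.Icc (-π) π, ∃ θ₂ ∈ Set.Icc (-π) π,
        81 * x ^ 4 - 54 * x ^ 3 - 45 * x ^ 2 + 18 * x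
          - 8 * (cos (θ₁ / 2) * cos (θ₂ / 2) * cos ((θ₁ - θ₂) / 2)) + 8 = 0)
    ↔ x ∈ Set.Icc (-(2 / 3) : ℝ) 0 ∪ Set.Icc (1 / 3 : ℝ) 1 := by
  constructor
  · rintro ⟨θ₁, h1, θ₂, h2, heq⟩
    have a1 : -1 ≤ cos (θ₁ / 2) := neg_one_le_cos _
    have a2 : cos (θ₁ / 2) ≤ 1 := cos_le_one _
    have b1 : -1 ≤ cos (θ₂ / 2) := neg_one_le_cos _
    have b2 : cos (θ₂ / 2) ≤ 1 := cos_le_one _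
    have d1 : -1 ≤ cos ((θ₁ - θ₂) / 2) := neg_one_le_cos _
    have d2 : cos ((θ₁ - θ₂) / 2) ≤ 1 := cos_le_one _
    have hab1 : cos (θ₁ / 2) * cos (θ₂ / 2) ≤ 1 := by nlinarith
    have hab2 : -1 ≤ cos (θ₁ / 2) * cos (θ₂ / 2) := by nlinarith
    have hF : cos (θ₁ / 2) * cos (θ₂ / 2) * cos ((θ₁ - θ₂) / 2) ≤ 1 := by nlinarith
    have hP : 81 * x ^ 4 - 54 * x ^ 3 - 45 * x ^ 2 + 18 * x ≤ 0 := by nlinarith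
    rcases le_or_gt x 0 with hx | hx
    · left
      refine ⟨?_, hx⟩
      by_contra h
      push_neg at h
      nlinarith [mul_pos (mul_pos (mul_pos
        (by linarith : (0:ℝ) < -x) (by linarith : (0:ℝ) < 1 - x))
        (by linarith : (0:ℝ) < -(3*x+2))) (by linarith : (0:ℝ) < 1 - 3*x)]
    · right
      constructor
      · by_contra h
        push_neg at h
        nlinarith [mul_pos (mul_pos (mul_pos
          hx (by linarith : (0:ℝ) < 1 - x))
          (by linarith : (0:ℝ) < 3*x+2)) (by linarith : (0:ℝ) < 1 - 3*x)]
      · by_contra h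
        push_neg at h
        nlinarith [mul_pos (mul_pos (mul_pos
          hx (by linarith : (0:ℝ) < x - 1))
          (by linarith : (0:ℝ) < 3*x+2)) (by linarith : (0:ℝ) < 3*x - 1)]
  · intro hx
    have hP : 81 * x ^ 4 - 54 * x ^ 3 - 45 * x ^ 2 + 18 * x ≤ 0 := by
      rcases hx with ⟨hl, hr⟩ | ⟨hl, hr⟩
      · nlinarith [mul_nonneg (mul_nonneg (mul_nonneg
          (by linarith : (0:ℝ) ≤ -x) (by linarith : (0:ℝ) ≤ 1 - x))
          (by linarith : (0:ℝ) ≤ 3*x+2)) (by linarith : (0:ℝ) ≤ 1 - 3*x)]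
      · nlinarith [mul_nonneg (mul_nonneg (mul_nonneg
          (by linarith : (0:ℝ) ≤ x) (by linarith : (0:ℝ) ≤ 1 - x))
          (by linarith : (0:ℝ) ≤ 3*x+2)) (by linarith : (0:ℝ) ≤ 3*x - 1)]
    set s : ℝ := |9*x^2 - 3*x - 3| with hs
    have hs2 : s ^ 2 = (9*x^2 - 3*x - 3) ^ 2 := sq_abs _
    have hsnn : 0 ≤ s := abs_nonneg _
    have hs3 : s ≤ 3 := by nlinarith
    set y : ℝ := (1 + s) / 4 with hy
    have hy0 : 0 ≤ y := by rw [hy]; linarith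
    have hy1 : y ≤ 1 := by rw [hy]; linarith
    set c : ℝ := Real.sqrt y with hc
    have hc0 : 0 ≤ c := Real.sqrt_nonneg _
    have hc1 : c ≤ 1 := Real.sqrt_le_one.mpr hy1
    have hcsq : c ^ 2 = y := Real.sq_sqrt hy0
    have harc0 : 0 ≤ arccos c := arccos_nonneg _
    have harc2 : arccos c ≤ π / 2 := arccos_le_pi_div_two.mpr hc0
    have hpi : 0 < π := pi_pos
    refine ⟨2 * arccos c, ⟨by linarith, by linarith⟩,
      -(2 * arccos c), ⟨by linarith, by linarith⟩, ?_⟩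
    have e1 : cos (2 * arccos c / 2) = c := by
      rw [mul_div_cancel_left₀ _ (two_ne_zero)]
      exact cos_arccos (by linarith) hc1
    have e2 : cos (-(2 * arccos c) / 2) = c := by
      rw [neg_div, cos_neg, mul_div_cancel_left₀ _ (two_ne_zero)]
      exact cos_arccos (by linarith) hc1
    have e3 : cos ((2 * arccos c - -(2 * arccos c)) / 2) = 2 * c ^ 2 - 1 := by
      have : (2 * arccos c - -(2 * arccos c)) / 2 = 2 * arccos c := by ring
      rw [this, cos_two_mul, cos_arccos (by linarith) hc1]
    rw [e1, e2, e3]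
    linear_combination (8 - 16 * (c ^ 2 + y)) * hcsq +
      (8 - 16 * (y + (1 + s) / 4)) * hy - hs2
end

section
/- For every real number x, there exist θ₁, θ₂ ∈ [−π, π] such that, writing c = cos θ₁ and d = cos θ₂, 625x⁴ − 250x² − 40x + 1 − 100(c + d)x² − 40(c + d + cd)x − 4(c + d + 4cd − c² − d²) = 0, if and only if x ∈ [−3/5, 1]. -/
open Real

theorem ac_spectrum_snub_square (x : ℝ) :
    (∃ θ₁ ∈ Set.Icc (-π) π, ∃ θ₂ ∈ Set.Icc (-π) π,
        625 * x ^ 4 - 250 * x ^ 2 - 40 * x + 1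
          - 100 * (cos θ₁ + cos θ₂) * x ^ 2
          - 40 * (cos θ₁ + cos θ₂ + cos θ₁ * cos θ₂) * x
          - 4 * (cos θ₁ + cos θ₂ + 4 * (cos θ₁ * cos θ₂) - (cos θ₁) ^ 2 - (cos θ₂) ^ 2) = 0)
    ↔ x ∈ Set.Icc (-(3 / 5) : ℝ) 1 := by
  constructor
  · rintro ⟨θ₁, hθ₁, θ₂, hθ₂, heq⟩
    set c := cos θ₁ with hc
    set d := cos θ₂ with hd
    have hc1 : -1 ≤ c := neg_one_le_cos θ₁
    have hc2 : c ≤ 1 := cos_le_one θ₁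
    have hd1 : -1 ≤ d := neg_one_le_cos θ₂
    have hd2 : d ≤ 1 := cos_le_one θ₂
    constructor
    · -- show -(3/5) ≤ x
      by_contra hx
      push_neg at hx
      have hA : (0:ℝ) ≤ (1 - c) * (100 * x ^ 2 + 40 * (1 + d) * x + 16 * d - 4 * c) := by
        apply mul_nonneg (by linarith)
        nlinarith [mul_nonneg (by linarith : (0:ℝ) ≤ -(3/5) - x)
          (by nlinarith : (0:ℝ) ≤ 20 - 40 * d - 100 * x)]
      have hB : (0:ℝ) ≤ (1 - d) * (100 * x ^ 2 + 80 * x + 16 - 4 * d) := by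
        apply mul_nonneg (by linarith)
        nlinarith [mul_nonneg (by linarith : (0:ℝ) ≤ -(5*x) - 3)
          (by linarith : (0:ℝ) ≤ -(5*x) - 1)]
      have hF11 : (0:ℝ) < 625 * (x - 1) * (x + 3/5) * (x + 1/5) ^ 2 := by
        have h1 : (0:ℝ) < (x - 1) * (x + 3/5) :=
          mul_pos_of_neg_of_neg (by linarith) (by linarith)
        have h2 : (0:ℝ) < (x + 1/5) ^ 2 := by
          nlinarith [pow_pos (show (0:ℝ) < -(x + 1/5) by linarith) 2]
        nlinarith [mul_pos h1 h2]
      nlinarith [hA, hB, hF11, heq]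
    · -- show x ≤ 1
      by_contra hx
      push_neg at hx
      have hA : (0:ℝ) ≤ (1 - c) * (100 * x ^ 2 + 40 * (1 + d) * x + 16 * d - 4 * c) := by
        apply mul_nonneg (by linarith)
        nlinarith [mul_nonneg (by linarith : (0:ℝ) ≤ 1 + d) (by linarith : (0:ℝ) ≤ x)]
      have hB : (0:ℝ) ≤ (1 - d) * (100 * x ^ 2 + 80 * x + 16 - 4 * d) := by
        apply mul_nonneg (by linarith)
        nlinarith
      have hF11 : (0:ℝ) < 625 * (x - 1) * (x + 3/5) * (x + 1/5) ^ 2 := by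
        have h1 : (0:ℝ) < (x - 1) * (x + 3/5) :=
          mul_pos (by linarith) (by linarith)
        have h2 : (0:ℝ) < (x + 1/5) ^ 2 := pow_pos (by linarith) 2
        nlinarith [mul_pos h1 h2]
      nlinarith [hA, hB, hF11, heq]
  · rintro ⟨hx1, hx2⟩
    -- take θ₁ = θ₂, reduce to finding c ∈ [-1,1] with G c = 0 via IVT
    set G : ℝ → ℝ := fun c =>
      625 * x ^ 4 - 250 * x ^ 2 - 40 * x + 1
        - 100 * (c + c) * x ^ 2
        - 40 * (c + c + c * c) * x
        - 4 * (c + c + 4 * (c * c) - c ^ 2 - c ^ 2) with hG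
    have hcont : ContinuousOn G (Set.Icc (-1 : ℝ) 1) := by
      apply Continuous.continuousOn
      unfold G
      continuity
    have hG1 : G 1 ≤ 0 := by
      have : G 1 = 625 * (x - 1) * (x + 3/5) * (x + 1/5) ^ 2 := by
        unfold G; ring
      rw [this]
      have h1 : (x - 1) * (x + 3/5) ≤ 0 :=
        mul_nonpos_of_nonpos_of_nonneg (by linarith) (by linarith)
      nlinarith [sq_nonneg (x + 1/5)]
    have hGm1 : 0 ≤ G (-1) := by
      have : G (-1) = (25 * x ^ 2 - 1) ^ 2 := by unfold G; ring
      rw [this]; positivity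
    have hiv : (0:ℝ) ∈ G '' Set.Icc (-1 : ℝ) 1 := by
      apply intermediate_value_Icc' (by norm_num : (-1:ℝ) ≤ 1) hcont
      exact ⟨hG1, hGm1⟩
    obtain ⟨c, hcmem, hGc⟩ := hiv
    obtain ⟨hc1, hc2⟩ := hcmem
    refine ⟨Real.arccos c, ⟨?_, Real.arccos_le_pi c⟩, Real.arccos c,
      ⟨?_, Real.arccos_le_pi c⟩, ?_⟩
    · linarith [Real.arccos_nonneg c, Real.pi_pos]
    · linarith [Real.arccos_nonneg c, Real.pi_pos]
    · rw [Real.cos_arccos hc1 hc2]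
      exact hGc
end

section
/- For every real number x, there exist θ₁, θ₂ ∈ [−π, π] such that 512x⁶ − 384x⁴ − 128ω₂x³ + 64(1 − ω₂)x² + 2ω₂ − 2ω₃ + ω₁ − 1 = 0, if and only if x ∈ [−3/4, 1]. -/
set_option maxHeartbeats 1000000

open Real

private lemma key_pos (p q r x : ℝ) (hp0 : 0 ≤ p) (hp1 : p ≤ 1) (hq0 : 0 ≤ q) (hq1 : q ≤ 1)
    (hr0 : -1 ≤ r) (hr1 : r ≤ 1)
    (hg : p^2 + q^2 + r^2 - 2*(p*q*r) = 1)
    (hx : x < -(3/4) ∨ 1 < x) :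
    0 < 512*x^6 - 384*x^4 - 128*(p*q*r)*x^3 + 64*(1 - p*q*r)*x^2 + 2*(p*q*r)
      - 2*((2*p*r - q)*(2*p*q - r)*(2*q*r - p))
      + (2*p^2 - 1)*(2*q^2 - 1)*(2*r^2 - 1) - 1 := by
  have hm1 : p*q*r ≤ 1 := by nlinarith [mul_nonneg hp0 hq0]
  have hs : (3:ℝ)/4 ≤ p^2 + q^2 + r^2 := by
    nlinarith [sq_nonneg (p^2 - q^2), sq_nonneg (q^2 - r^2), sq_nonneg (p^2 - r^2),
      sq_nonneg (p*q*r), sq_nonneg p, sq_nonneg q, sq_nonneg r,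
      sq_nonneg (p^2+q^2+r^2-3), sq_nonneg (p^2+q^2+r^2-3/4)]
  have hm8 : -(1/8 : ℝ) ≤ p*q*r := by nlinarith
  have hE2 : 0 ≤ (1 + 2*(p*q*r))^2/3 - (p^2*q^2 + q^2*r^2 + r^2*p^2) := by
    nlinarith [sq_nonneg (p^2 - q^2), sq_nonneg (q^2 - r^2), sq_nonneg (p^2 - r^2)]
  have hA : 0 < 512*x^6 - 384*x^4 - 128*x^3 := by
    rcases hx with h | h
    · have h1 : 0 < (-x)^3 * (1-x) := by
        apply mul_pos (pow_pos (by linarith : (0:ℝ) < -x) 3) (by linarith)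
      have h2 : (0:ℝ) < (2*x+1)^2 := by nlinarith
      nlinarith [mul_pos h1 h2]
    · have h1 : 0 < x^3 * (x-1) := by
        apply mul_pos (pow_pos (by linarith : (0:ℝ) < x) 3) (by linarith)
      have h2 : (0:ℝ) < (2*x+1)^2 := by nlinarith
      nlinarith [mul_pos h1 h2]
  have hB : 0 < 512*x^6 - 384*x^4 + 16*x^3 + 72*x^2 - 27/8 := by
    rcases hx with h | h
    · have h1 : 0 < (-(4*x+3)) * (-(4*x-1)) := by
        apply mul_pos (by linarith) (by linarith)
      have h2 : (0:ℝ) < (16*x^2 - 4*x - 3)^2 := by nlinarith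
      nlinarith [mul_pos h1 h2]
    · have h1 : 0 < (4*x+3) * (4*x-1) := by
        apply mul_pos (by linarith) (by linarith)
      have h2 : (0:ℝ) < (16*x^2 - 4*x - 3)^2 := by nlinarith
      nlinarith [mul_pos h1 h2]
  have ha : (0:ℝ) ≤ p*q*r + 1/8 := by linarith
  have hb : (0:ℝ) ≤ 1 - p*q*r := by linarith
  have hsum : 0 < (p*q*r + 1/8)*(512*x^6 - 384*x^4 - 128*x^3)
      + (1 - p*q*r)*(512*x^6 - 384*x^4 + 16*x^3 + 72*x^2 - 27/8) := by
    rcases le_total (512*x^6 - 384*x^4 - 128*x^3)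
        (512*x^6 - 384*x^4 + 16*x^3 + 72*x^2 - 27/8) with hAB | hAB
    · nlinarith [mul_nonneg hb (by linarith : (0:ℝ) ≤ 16*x^3 + 72*x^2 - 27/8 - (-128*x^3))]
    · nlinarith [mul_nonneg ha (by linarith : (0:ℝ) ≤ -128*x^3 - (16*x^3 + 72*x^2 - 27/8))]
  have hred : 512*x^6 - 384*x^4 - 128*(p*q*r)*x^3 + 64*(1 - p*q*r)*x^2 + 2*(p*q*r)
      - 2*((2*p*r - q)*(2*p*q - r)*(2*q*r - p))
      + (2*p^2 - 1)*(2*q^2 - 1)*(2*r^2 - 1) - 1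
      = (8/9)*((p*q*r + 1/8)*(512*x^6 - 384*x^4 - 128*x^3)
          + (1 - p*q*r)*(512*x^6 - 384*x^4 + 16*x^3 + 72*x^2 - 27/8))
        + (8/3)*((p*q*r + 1/8)*(1 - p*q*r))
        + 8*((1 + 2*(p*q*r))^2/3 - (p^2*q^2 + q^2*r^2 + r^2*p^2)) := by
    linear_combination (2 + 8*(p*q*r)) * hg
  rw [hred]
  have h3 : (0:ℝ) ≤ (p*q*r + 1/8)*(1 - p*q*r) := mul_nonneg ha hb
  linarith

private noncomputable def auxF (x : ℝ) : ℝ → ℝ := fun θ =>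
    512 * x ^ 6 - 384 * x ^ 4
      - 128 * (cos (θ / 2) * cos (θ / 2) * cos ((θ + θ) / 2)) * x ^ 3
      + 64 * (1 - cos (θ / 2) * cos (θ / 2) * cos ((θ + θ) / 2)) * x ^ 2
      + 2 * (cos (θ / 2) * cos (θ / 2) * cos ((θ + θ) / 2))
      - 2 * (cos ((2 * θ + θ) / 2) * cos ((θ - θ) / 2) * cos ((θ + 2 * θ) / 2))
      + cos θ * cos θ * cos (θ + θ) - 1

private lemma auxF_cont (x : ℝ) : Continuous (auxF x) := by
  unfold auxF; fun_prop

private lemma auxF_zero (x : ℝ) : auxF x 0 = 512*x^6 - 384*x^4 - 128*x^3 := by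
  unfold auxF; norm_num

private lemma auxF_pi (x : ℝ) : auxF x π = 512*x^6 - 384*x^4 + 64*x^2 := by
  unfold auxF
  rw [show (2*π+π)/2 = π + π/2 by ring, show (π-π)/2 = (0:ℝ) by ring,
    show (π+2*π)/2 = π + π/2 by ring, show (π+π)/2 = π by ring, show π+π = 2*π by ring]
  simp [Real.cos_pi_div_two, Real.cos_pi, Real.sin_pi, Real.cos_two_pi, Real.cos_add]

private lemma auxF_b (x : ℝ) :
    auxF x (2*π/3) = 512*x^6 - 384*x^4 + 16*x^3 + 72*x^2 - 27/8 := by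
  unfold auxF
  rw [show (2*(2*π/3)+2*π/3)/2 = π by ring, show (2*π/3-2*π/3)/2 = (0:ℝ) by ring,
    show (2*π/3+2*(2*π/3))/2 = π by ring, show (2*π/3+2*π/3)/2 = π - π/3 by ring,
    show (2*π/3)/2 = π/3 by ring, show 2*π/3+2*π/3 = π + π/3 by ring,
    show 2*π/3 = π - π/3 by ring]
  simp [Real.cos_pi_sub, Real.cos_pi_div_three, Real.cos_pi, Real.sin_pi,
    Real.cos_zero, Real.cos_add]
  ring

theorem ac_spectrum_rhombitrihexagonal (x : ℝ) :
    (∃ θ₁ ∈ Set.Icc (-π) π, ∃ θ₂ ∈ Set.Icc (-π) π,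
        512 * x ^ 6 - 384 * x ^ 4
          - 128 * (cos (θ₁ / 2) * cos (θ₂ / 2) * cos ((θ₁ + θ₂) / 2)) * x ^ 3
          + 64 * (1 - cos (θ₁ / 2) * cos (θ₂ / 2) * cos ((θ₁ + θ₂) / 2)) * x ^ 2
          + 2 * (cos (θ₁ / 2) * cos (θ₂ / 2) * cos ((θ₁ + θ₂) / 2))
          - 2 * (cos ((2 * θ₁ + θ₂) / 2) * cos ((θ₂ - θ₁) / 2) * cos ((θ₁ + 2 * θ₂) / 2))
          + cos θ₁ * cos θ₂ * cos (θ₁ + θ₂) - 1 = 0)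
    ↔ x ∈ Set.Icc (-(3 / 4) : ℝ) 1 := by
  have hπ := Real.pi_pos
  constructor
  · rintro ⟨θ₁, hθ₁, θ₂, hθ₂, heq⟩
    by_contra hxc
    simp only [Set.mem_Icc, not_and_or, not_le] at hxc
    have hx : x < -(3/4) ∨ 1 < x := by
      rcases hxc with h | h
      · left; linarith
      · right; exact h
    obtain ⟨hθ₁l, hθ₁r⟩ := hθ₁
    obtain ⟨hθ₂l, hθ₂r⟩ := hθ₂
    set p := cos (θ₁ / 2) with hpdef
    set q := cos (θ₂ / 2) with hqdef
    set r := cos ((θ₁ + θ₂) / 2) with hrdef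
    have hp0 : 0 ≤ p := Real.cos_nonneg_of_mem_Icc ⟨by linarith, by linarith⟩
    have hp1 : p ≤ 1 := Real.cos_le_one _
    have hq0 : 0 ≤ q := Real.cos_nonneg_of_mem_Icc ⟨by linarith, by linarith⟩
    have hq1 : q ≤ 1 := Real.cos_le_one _
    have hr0 : -1 ≤ r := Real.neg_one_le_cos _
    have hr1 : r ≤ 1 := Real.cos_le_one _
    -- basic addition identities
    have hradd : r = p * q - sin (θ₁/2) * sin (θ₂/2) := by
      rw [hrdef, hpdef, hqdef, show (θ₁ + θ₂)/2 = θ₁/2 + θ₂/2 by ring, Real.cos_add]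
    have hs1 := sin_sq_add_cos_sq (θ₁/2)
    have hs2 := sin_sq_add_cos_sq (θ₂/2)
    rw [← hpdef] at hs1
    rw [← hqdef] at hs2
    have hg : p^2 + q^2 + r^2 - 2*(p*q*r) = 1 := by
      linear_combination (r - p*q - sin (θ₁/2) * sin (θ₂/2)) * hradd
        + (sin (θ₁/2))^2 * hs2 + (1 - q^2) * hs1
    -- double angle
    have h1 : cos θ₁ = 2*p^2 - 1 := by
      have := Real.cos_two_mul (θ₁/2)
      rw [show 2*(θ₁/2) = θ₁ by ring, ← hpdef] at this
      linarith
    have h2 : cos θ₂ = 2*q^2 - 1 := by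
      have := Real.cos_two_mul (θ₂/2)
      rw [show 2*(θ₂/2) = θ₂ by ring, ← hqdef] at this
      linarith
    have h3 : cos (θ₁ + θ₂) = 2*r^2 - 1 := by
      have := Real.cos_two_mul ((θ₁ + θ₂)/2)
      rw [show 2*((θ₁ + θ₂)/2) = θ₁ + θ₂ by ring, ← hrdef] at this
      linarith
    -- the three shifted cosines
    have h4 : cos ((2 * θ₁ + θ₂) / 2) = 2*p*r - q := by
      have e1 : (2 * θ₁ + θ₂) / 2 = θ₁/2 + (θ₁ + θ₂)/2 := by ring
      have e2 := Real.cos_sub ((θ₁ + θ₂)/2) (θ₁/2)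
      rw [show (θ₁ + θ₂)/2 - θ₁/2 = θ₂/2 by ring] at e2
      rw [e1, Real.cos_add]
      rw [← hpdef, ← hrdef] at *
      rw [← hqdef] at e2
      nlinarith [e2]
    have h5 : cos ((θ₂ - θ₁) / 2) = 2*p*q - r := by
      have e2 := Real.cos_sub (θ₂/2) (θ₁/2)
      rw [show θ₂/2 - θ₁/2 = (θ₂ - θ₁)/2 by ring] at e2
      rw [e2, ← hpdef, ← hqdef]
      nlinarith [hradd]
    have h6 : cos ((θ₁ + 2 * θ₂) / 2) = 2*q*r - p := by
      have e1 : (θ₁ + 2 * θ₂) / 2 = θ₂/2 + (θ₁ + θ₂)/2 := by ring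
      have e2 := Real.cos_sub ((θ₁ + θ₂)/2) (θ₂/2)
      rw [show (θ₁ + θ₂)/2 - θ₂/2 = θ₁/2 by ring] at e2
      rw [e1, Real.cos_add]
      rw [← hqdef, ← hrdef] at *
      rw [← hpdef] at e2
      nlinarith [e2]
    rw [h1, h2, h3, h4, h5, h6] at heq
    have hpos := key_pos p q r x hp0 hp1 hq0 hq1 hr0 hr1 hg hx
    nlinarith [heq, hpos]
  · rintro ⟨hxl, hxr⟩
    have h23 : (0:ℝ) ≤ 2*π/3 := by linarith
    have h23' : 2*π/3 ≤ π := by linarith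
    have hcont : ∀ a b : ℝ, ContinuousOn (auxF x) (Set.Icc a b) :=
      fun a b => (auxF_cont x).continuousOn
    have main : ∃ θ ∈ Set.Icc 0 π, auxF x θ = 0 := by
      rcases le_total x 0 with hx0 | hx0
      · -- A ≥ 0 ≥ B on [-3/4, 0]
        have hA : 0 ≤ 512*x^6 - 384*x^4 - 128*x^3 := by
          nlinarith [mul_nonneg (mul_nonneg (pow_nonneg (by linarith : (0:ℝ) ≤ -x) 3)
            (by linarith : (0:ℝ) ≤ 1 - x)) (sq_nonneg (2*x+1))]
        have hB : 512*x^6 - 384*x^4 + 16*x^3 + 72*x^2 - 27/8 ≤ 0 := by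
          nlinarith [mul_nonneg (mul_nonneg (by linarith : (0:ℝ) ≤ 4*x+3)
            (by linarith : (0:ℝ) ≤ 1 - 4*x)) (sq_nonneg (16*x^2 - 4*x - 3))]
        have := intermediate_value_Icc' h23 (hcont 0 (2*π/3))
        have hmem : (0:ℝ) ∈ Set.Icc (auxF x (2*π/3)) (auxF x 0) := by
          rw [auxF_zero, auxF_b]; exact ⟨hB, hA⟩
        obtain ⟨θ, hθm, hθe⟩ := this hmem
        exact ⟨θ, ⟨hθm.1, le_trans hθm.2 h23'⟩, hθe⟩
      · rcases le_total x (1/4) with hx4 | hx4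
        · -- B ≤ 0 ≤ C on [0, 1/4], use [2π/3, π]
          have hB : 512*x^6 - 384*x^4 + 16*x^3 + 72*x^2 - 27/8 ≤ 0 := by
            nlinarith [mul_nonneg (mul_nonneg (by linarith : (0:ℝ) ≤ 4*x+3)
              (by linarith : (0:ℝ) ≤ 1 - 4*x)) (sq_nonneg (16*x^2 - 4*x - 3))]
          have hC : 0 ≤ 512*x^6 - 384*x^4 + 64*x^2 := by
            nlinarith [mul_nonneg (mul_nonneg (sq_nonneg x)
              (by nlinarith : (0:ℝ) ≤ 1 - 2*x^2)) (by nlinarith : (0:ℝ) ≤ 1 - 4*x^2)]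
          have := intermediate_value_Icc h23' (hcont (2*π/3) π)
          have hmem : (0:ℝ) ∈ Set.Icc (auxF x (2*π/3)) (auxF x π) := by
            rw [auxF_pi, auxF_b]; exact ⟨hB, hC⟩
          obtain ⟨θ, hθm, hθe⟩ := this hmem
          exact ⟨θ, ⟨le_trans h23 hθm.1, hθm.2⟩, hθe⟩
        · -- A ≤ 0 ≤ B on [1/4, 1], use [0, 2π/3]
          have hA : 512*x^6 - 384*x^4 - 128*x^3 ≤ 0 := by
            nlinarith [mul_nonneg (mul_nonneg (pow_nonneg (by linarith : (0:ℝ) ≤ x) 3)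
              (by linarith : (0:ℝ) ≤ 1 - x)) (sq_nonneg (2*x+1))]
          have hB : 0 ≤ 512*x^6 - 384*x^4 + 16*x^3 + 72*x^2 - 27/8 := by
            nlinarith [mul_nonneg (mul_nonneg (by linarith : (0:ℝ) ≤ 4*x+3)
              (by linarith : (0:ℝ) ≤ 4*x - 1)) (sq_nonneg (16*x^2 - 4*x - 3))]
          have := intermediate_value_Icc h23 (hcont 0 (2*π/3))
          have hmem : (0:ℝ) ∈ Set.Icc (auxF x 0) (auxF x (2*π/3)) := by
            rw [auxF_zero, auxF_b]; exact ⟨hA, hB⟩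
          obtain ⟨θ, hθm, hθe⟩ := this hmem
          exact ⟨θ, ⟨hθm.1, le_trans hθm.2 h23'⟩, hθe⟩
    obtain ⟨θ, ⟨hθl, hθr⟩, hθe⟩ := main
    refine ⟨θ, ⟨by linarith, hθr⟩, θ, ⟨by linarith, hθr⟩, ?_⟩
    simpa [auxF] using hθe
end

section
/- For every real number x, there exist θ₁, θ₂ ∈ [−π, π] such that 15625x⁶ − 9375x⁴ − (4000ω₂ + 1000)x³ − (2400ω₂ − 1275)x² − (240ω₂ + 80ω₃ − 200)x + 8ω₁ + 32ω₂ − 32ω₃ − 13 = 0, if and only if x ∈ [−(1 + √3)/5, 1]. -/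
open Real

set_option maxHeartbeats 2000000

private lemma cos_double (t : ℝ) : cos t = 2 * cos (t / 2) ^ 2 - 1 := by
  have h := Real.cos_two_mul (t / 2)
  have h2 : 2 * (t / 2) = t := by ring
  rwa [h2] at h

private lemma triple_cos_le_one (a b c : ℝ) : cos a * cos b * cos c ≤ 1 := by
  have ha := Real.neg_one_le_cos a
  have ha' := Real.cos_le_one a
  have hb := Real.neg_one_le_cos b
  have hb' := Real.cos_le_one b
  have hc := Real.neg_one_le_cos c
  have hc' := Real.cos_le_one c
  nlinarith [mul_self_nonneg (cos a * cos b - 1), mul_self_nonneg (cos a * cos b + 1),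
    mul_self_nonneg (cos a - cos b), mul_self_nonneg (cos a + cos b),
    mul_self_nonneg (cos a * cos b * cos c - 1), mul_self_nonneg (cos a * cos b * cos c + 1)]

private lemma W_lb (θ₁ θ₂ : ℝ) :
    -(1 / 8 : ℝ) ≤ cos (θ₁ / 2) * cos (θ₂ / 2) * cos ((θ₁ + θ₂) / 2) := by
  have hr : cos ((θ₁ + θ₂) / 2) = cos (θ₁ / 2) * cos (θ₂ / 2) - sin (θ₁ / 2) * sin (θ₂ / 2) := by
    have h := Real.cos_add (θ₁ / 2) (θ₂ / 2)
    have h2 : θ₁ / 2 + θ₂ / 2 = (θ₁ + θ₂) / 2 := by ring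
    rwa [h2] at h
  have hd : cos (θ₁ / 2 - θ₂ / 2) = cos (θ₁ / 2) * cos (θ₂ / 2) + sin (θ₁ / 2) * sin (θ₂ / 2) :=
    Real.cos_sub (θ₁ / 2) (θ₂ / 2)
  have hsq : cos (θ₁ / 2 - θ₂ / 2) ^ 2 ≤ 1 := Real.cos_sq_le_one _
  have he : 8 * (cos (θ₁ / 2) * cos (θ₂ / 2) * cos ((θ₁ + θ₂) / 2)) + 1
      = (2 * cos ((θ₁ + θ₂) / 2) + cos (θ₁ / 2 - θ₂ / 2)) ^ 2
        + (1 - cos (θ₁ / 2 - θ₂ / 2) ^ 2) := by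
    linear_combination (-(4 * cos ((θ₁ + θ₂) / 2))) * hr + (-(4 * cos ((θ₁ + θ₂) / 2))) * hd
  nlinarith [sq_nonneg (2 * cos ((θ₁ + θ₂) / 2) + cos (θ₁ / 2 - θ₂ / 2)), he, hsq]

private lemma omega1_eq (θ₁ θ₂ : ℝ) :
    cos θ₁ * cos θ₂ * cos (θ₁ + θ₂) =
      (1 - 2 * (cos (θ₁ / 2) * cos (θ₂ / 2) * cos ((θ₁ + θ₂) / 2))) ^ 2
        - 4 * (sin (θ₁ / 2) * sin (θ₂ / 2) * sin ((θ₁ + θ₂) / 2)) ^ 2 := by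
  have hr : cos ((θ₁ + θ₂) / 2) = cos (θ₁ / 2) * cos (θ₂ / 2) - sin (θ₁ / 2) * sin (θ₂ / 2) := by
    have h := Real.cos_add (θ₁ / 2) (θ₂ / 2)
    have h2 : θ₁ / 2 + θ₂ / 2 = (θ₁ + θ₂) / 2 := by ring
    rwa [h2] at h
  have hsr : sin ((θ₁ + θ₂) / 2) = sin (θ₁ / 2) * cos (θ₂ / 2) + cos (θ₁ / 2) * sin (θ₂ / 2) := by
    have h := Real.sin_add (θ₁ / 2) (θ₂ / 2)
    have h2 : θ₁ / 2 + θ₂ / 2 = (θ₁ + θ₂) / 2 := by ring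
    rwa [h2] at h
  have hc1 : cos θ₁ = 2 * cos (θ₁ / 2) ^ 2 - 1 := cos_double θ₁
  have hc2 : cos θ₂ = 2 * cos (θ₂ / 2) ^ 2 - 1 := cos_double θ₂
  have hc3 : cos (θ₁ + θ₂) = 2 * cos ((θ₁ + θ₂) / 2) ^ 2 - 1 := cos_double (θ₁ + θ₂)
  have hpa : sin (θ₁ / 2) ^ 2 = 1 - cos (θ₁ / 2) ^ 2 := by
    have := Real.sin_sq_add_cos_sq (θ₁ / 2); linarith
  have hpb : sin (θ₂ / 2) ^ 2 = 1 - cos (θ₂ / 2) ^ 2 := by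
    have := Real.sin_sq_add_cos_sq (θ₂ / 2); linarith
  rw [hc1, hc2, hc3, hr, hsr]
  set ca := cos (θ₁ / 2)
  set sa := sin (θ₁ / 2)
  set cb := cos (θ₂ / 2)
  set sb := sin (θ₂ / 2)
  linear_combination (2*sb^2 + 4*sa^2*cb^2*sb^2 + 8*ca*sa*cb*sb^3 + (-4)*ca^2*sb^2 + 4*ca^2*sb^4) * hpa
    + (2 + 8*ca*sa*cb*sb + (-2)*ca^2 + 4*ca^2*sb^2 + (-4)*ca^2*cb^2 + (-8)*ca^3*sa*cb*sb + (-4)*ca^4*sb^2 + 4*ca^4*cb^2) * hpb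

private lemma omega3_eq (θ₁ θ₂ : ℝ) :
    cos ((2 * θ₁ + θ₂) / 2) * cos ((θ₂ - θ₁) / 2) * cos ((θ₁ + 2 * θ₂) / 2) =
      2 * (cos (θ₁ / 2) * cos (θ₂ / 2) * cos ((θ₁ + θ₂) / 2)) ^ 2
        - cos (θ₁ / 2) * cos (θ₂ / 2) * cos ((θ₁ + θ₂) / 2)
        + 2 * (sin (θ₁ / 2) * sin (θ₂ / 2) * sin ((θ₁ + θ₂) / 2)) ^ 2 := by
  have hr : cos ((θ₁ + θ₂) / 2) = cos (θ₁ / 2) * cos (θ₂ / 2) - sin (θ₁ / 2) * sin (θ₂ / 2) := by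
    have h := Real.cos_add (θ₁ / 2) (θ₂ / 2)
    have h2 : θ₁ / 2 + θ₂ / 2 = (θ₁ + θ₂) / 2 := by ring
    rwa [h2] at h
  have hsr : sin ((θ₁ + θ₂) / 2) = sin (θ₁ / 2) * cos (θ₂ / 2) + cos (θ₁ / 2) * sin (θ₂ / 2) := by
    have h := Real.sin_add (θ₁ / 2) (θ₂ / 2)
    have h2 : θ₁ / 2 + θ₂ / 2 = (θ₁ + θ₂) / 2 := by ring
    rwa [h2] at h
  have h5 : cos ((2 * θ₁ + θ₂) / 2)
      = cos (θ₁ / 2) * cos ((θ₁ + θ₂) / 2) - sin (θ₁ / 2) * sin ((θ₁ + θ₂) / 2) := by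
    have h := Real.cos_add (θ₁ / 2) ((θ₁ + θ₂) / 2)
    have h2 : θ₁ / 2 + (θ₁ + θ₂) / 2 = (2 * θ₁ + θ₂) / 2 := by ring
    rwa [h2] at h
  have h6 : cos ((θ₂ - θ₁) / 2) = cos (θ₂ / 2) * cos (θ₁ / 2) + sin (θ₂ / 2) * sin (θ₁ / 2) := by
    have h := Real.cos_sub (θ₂ / 2) (θ₁ / 2)
    have h2 : θ₂ / 2 - θ₁ / 2 = (θ₂ - θ₁) / 2 := by ring
    rwa [h2] at h
  have h7 : cos ((θ₁ + 2 * θ₂) / 2)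
      = cos (θ₂ / 2) * cos ((θ₁ + θ₂) / 2) - sin (θ₂ / 2) * sin ((θ₁ + θ₂) / 2) := by
    have h := Real.cos_add (θ₂ / 2) ((θ₁ + θ₂) / 2)
    have h2 : θ₂ / 2 + (θ₁ + θ₂) / 2 = (θ₁ + 2 * θ₂) / 2 := by ring
    rwa [h2] at h
  have hpa : sin (θ₁ / 2) ^ 2 = 1 - cos (θ₁ / 2) ^ 2 := by
    have := Real.sin_sq_add_cos_sq (θ₁ / 2); linarith
  have hpb : sin (θ₂ / 2) ^ 2 = 1 - cos (θ₂ / 2) ^ 2 := by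
    have := Real.sin_sq_add_cos_sq (θ₂ / 2); linarith
  rw [h5, h6, h7, hr, hsr]
  set ca := cos (θ₁ / 2)
  set sa := sin (θ₁ / 2)
  set cb := cos (θ₂ / 2)
  set sb := sin (θ₂ / 2)
  linear_combination (ca*sa*cb*sb^3 + ca*sa*cb^3*sb + (-1)*ca^2*cb^2*sb^2 + (-1)*ca^2*cb^4) * hpa
    + (ca*sa*cb*sb + (-1)*ca^2*cb^2) * hpb

private lemma key_ident (x θ₁ θ₂ : ℝ) :
    15625 * x ^ 6 - 9375 * x ^ 4
          - (4000 * (cos (θ₁ / 2) * cos (θ₂ / 2) * cos ((θ₁ + θ₂) / 2)) + 1000) * x ^ 3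
          - (2400 * (cos (θ₁ / 2) * cos (θ₂ / 2) * cos ((θ₁ + θ₂) / 2)) - 1275) * x ^ 2
          - (240 * (cos (θ₁ / 2) * cos (θ₂ / 2) * cos ((θ₁ + θ₂) / 2))
              + 80 * (cos ((2 * θ₁ + θ₂) / 2) * cos ((θ₂ - θ₁) / 2) * cos ((θ₁ + 2 * θ₂) / 2))
              - 200) * x
          + 8 * (cos θ₁ * cos θ₂ * cos (θ₁ + θ₂))
          + 32 * (cos (θ₁ / 2) * cos (θ₂ / 2) * cos ((θ₁ + θ₂) / 2))
          - 32 * (cos ((2 * θ₁ + θ₂) / 2) * cos ((θ₂ - θ₁) / 2) * cos ((θ₁ + 2 * θ₂) / 2))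
          - 13 =
      -32 * (5 * x + 1) * (cos (θ₁ / 2) * cos (θ₂ / 2) * cos ((θ₁ + θ₂) / 2)) ^ 2
        - 32 * (5 * x + 1) * (25 * x ^ 2 + 10 * x - 1)
            * (cos (θ₁ / 2) * cos (θ₂ / 2) * cos ((θ₁ + θ₂) / 2))
        - 32 * (5 * x + 3) * (sin (θ₁ / 2) * sin (θ₂ / 2) * sin ((θ₁ + θ₂) / 2)) ^ 2
        + (5 * x + 1) * (25 * x ^ 2 - 5) * (125 * x ^ 3 - 25 * x ^ 2 - 45 * x + 1) := by
  rw [omega1_eq, omega3_eq]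
  ring


private lemma diag_val_zero (x : ℝ) :
    15625 * x ^ 6 - 9375 * x ^ 4
          - (4000 * (cos (0 / 2) * cos (0 / 2) * cos ((0 + 0) / 2)) + 1000) * x ^ 3
          - (2400 * (cos (0 / 2) * cos (0 / 2) * cos ((0 + 0) / 2)) - 1275) * x ^ 2
          - (240 * (cos (0 / 2) * cos (0 / 2) * cos ((0 + 0) / 2))
              + 80 * (cos ((2 * 0 + 0) / 2) * cos ((0 - 0) / 2) * cos ((0 + 2 * 0) / 2))
              - 200) * x
          + 8 * (cos 0 * cos 0 * cos (0 + 0))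
          + 32 * (cos (0 / 2) * cos (0 / 2) * cos ((0 + 0) / 2))
          - 32 * (cos ((2 * 0 + 0) / 2) * cos ((0 - 0) / 2) * cos ((0 + 2 * 0) / 2))
          - 13 = (5*x - 5) * (5*x + 1)^5 := by
  rw [key_ident x 0 0]
  norm_num
  ring

private lemma diag_val_K (x : ℝ) :
    15625 * x ^ 6 - 9375 * x ^ 4
          - (4000 * (cos ((2*π/3) / 2) * cos ((2*π/3) / 2) * cos (((2*π/3) + (2*π/3)) / 2)) + 1000) * x ^ 3
          - (2400 * (cos ((2*π/3) / 2) * cos ((2*π/3) / 2) * cos (((2*π/3) + (2*π/3)) / 2)) - 1275) * x ^ 2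
          - (240 * (cos ((2*π/3) / 2) * cos ((2*π/3) / 2) * cos (((2*π/3) + (2*π/3)) / 2))
              + 80 * (cos ((2 * (2*π/3) + (2*π/3)) / 2) * cos (((2*π/3) - (2*π/3)) / 2) * cos (((2*π/3) + 2 * (2*π/3)) / 2))
              - 200) * x
          + 8 * (cos (2*π/3) * cos (2*π/3) * cos ((2*π/3) + (2*π/3)))
          + 32 * (cos ((2*π/3) / 2) * cos ((2*π/3) / 2) * cos (((2*π/3) + (2*π/3)) / 2))
          - 32 * (cos ((2 * (2*π/3) + (2*π/3)) / 2) * cos (((2*π/3) - (2*π/3)) / 2) * cos (((2*π/3) + 2 * (2*π/3)) / 2))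
          - 13 = (25*x^2 - 5*x - 5)^2 * (25*x^2 + 10*x - 2) := by
  have hs3 : Real.sqrt 3 ^ 2 = 3 := Real.sq_sqrt (by norm_num)
  rw [key_ident x (2*π/3) (2*π/3), show (2*π/3)/2 = π/3 by ring,
      show ((2*π/3) + (2*π/3))/2 = π - π/3 by ring, Real.cos_pi_sub, Real.sin_pi_sub,
      Real.cos_pi_div_three, Real.sin_pi_div_three]
  linear_combination (-((5*x+3)/2) * (Real.sqrt 3^4 + 3*Real.sqrt 3^2 + 9)) * hs3

private lemma diag_val_pi (x : ℝ) :
    15625 * x ^ 6 - 9375 * x ^ 4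
          - (4000 * (cos (π / 2) * cos (π / 2) * cos ((π + π) / 2)) + 1000) * x ^ 3
          - (2400 * (cos (π / 2) * cos (π / 2) * cos ((π + π) / 2)) - 1275) * x ^ 2
          - (240 * (cos (π / 2) * cos (π / 2) * cos ((π + π) / 2))
              + 80 * (cos ((2 * π + π) / 2) * cos ((π - π) / 2) * cos ((π + 2 * π) / 2))
              - 200) * x
          + 8 * (cos π * cos π * cos (π + π))
          + 32 * (cos (π / 2) * cos (π / 2) * cos ((π + π) / 2))
          - 32 * (cos ((2 * π + π) / 2) * cos ((π - π) / 2) * cos ((π + 2 * π) / 2))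
          - 13 = (25*x^2 - 5) * (5*x + 1) * (125*x^3 - 25*x^2 - 45*x + 1) := by
  rw [key_ident x π π, show (π + π)/2 = π by ring, Real.cos_pi_div_two,
      Real.sin_pi_div_two, Real.cos_pi, Real.sin_pi]
  ring

private lemma anti_val_zero (x : ℝ) :
    15625 * x ^ 6 - 9375 * x ^ 4
          - (4000 * (cos (0 / 2) * cos ((-0) / 2) * cos ((0 + (-0)) / 2)) + 1000) * x ^ 3
          - (2400 * (cos (0 / 2) * cos ((-0) / 2) * cos ((0 + (-0)) / 2)) - 1275) * x ^ 2
          - (240 * (cos (0 / 2) * cos ((-0) / 2) * cos ((0 + (-0)) / 2))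
              + 80 * (cos ((2 * 0 + (-0)) / 2) * cos (((-0) - 0) / 2) * cos ((0 + 2 * (-0)) / 2))
              - 200) * x
          + 8 * (cos 0 * cos (-0) * cos (0 + (-0)))
          + 32 * (cos (0 / 2) * cos ((-0) / 2) * cos ((0 + (-0)) / 2))
          - 32 * (cos ((2 * 0 + (-0)) / 2) * cos (((-0) - 0) / 2) * cos ((0 + 2 * (-0)) / 2))
          - 13 = (5*x - 5) * (5*x + 1)^5 := by
  rw [key_ident x 0 (-0)]
  norm_num
  ring

private lemma anti_val (x t0 : ℝ) (hct0 : cos t0 = -(25*x^2 + 10*x)) :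
    15625 * x ^ 6 - 9375 * x ^ 4
          - (4000 * (cos (t0 / 2) * cos ((-t0) / 2) * cos ((t0 + (-t0)) / 2)) + 1000) * x ^ 3
          - (2400 * (cos (t0 / 2) * cos ((-t0) / 2) * cos ((t0 + (-t0)) / 2)) - 1275) * x ^ 2
          - (240 * (cos (t0 / 2) * cos ((-t0) / 2) * cos ((t0 + (-t0)) / 2))
              + 80 * (cos ((2 * t0 + (-t0)) / 2) * cos (((-t0) - t0) / 2) * cos ((t0 + 2 * (-t0)) / 2))
              - 200) * x
          + 8 * (cos t0 * cos (-t0) * cos (t0 + (-t0)))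
          + 32 * (cos (t0 / 2) * cos ((-t0) / 2) * cos ((t0 + (-t0)) / 2))
          - 32 * (cos ((2 * t0 + (-t0)) / 2) * cos (((-t0) - t0) / 2) * cos ((t0 + 2 * (-t0)) / 2))
          - 13 = (5*x + 1)^5 * (5*x + 3) := by
  have hcsq : cos (t0/2)^2 = (1 - (25*x^2 + 10*x))/2 := by
    have h := Real.cos_sq (t0/2)
    rw [show 2*(t0/2) = t0 by ring, hct0] at h
    linarith
  rw [key_ident x t0 (-t0),
      show (-t0)/2 = -(t0/2) by ring, Real.cos_neg, Real.sin_neg,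
      show (t0 + -t0)/2 = (0:ℝ) by ring, Real.cos_zero, Real.sin_zero]
  linear_combination (-32*(5*x+1)*(cos (t0/2)^2 + (1 - (25*x^2 + 10*x))/2)
    - 32*(5*x+1)*(25*x^2 + 10*x - 1)) * hcsq

private lemma ivt_diag (x a b : ℝ) (ha : 0 ≤ a) (hab : a ≤ b) (hb : b ≤ π)
    (va vb : ℝ)
    (hva : 15625 * x ^ 6 - 9375 * x ^ 4
          - (4000 * (cos (a / 2) * cos (a / 2) * cos ((a + a) / 2)) + 1000) * x ^ 3
          - (2400 * (cos (a / 2) * cos (a / 2) * cos ((a + a) / 2)) - 1275) * x ^ 2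
          - (240 * (cos (a / 2) * cos (a / 2) * cos ((a + a) / 2))
              + 80 * (cos ((2 * a + a) / 2) * cos ((a - a) / 2) * cos ((a + 2 * a) / 2))
              - 200) * x
          + 8 * (cos a * cos a * cos (a + a))
          + 32 * (cos (a / 2) * cos (a / 2) * cos ((a + a) / 2))
          - 32 * (cos ((2 * a + a) / 2) * cos ((a - a) / 2) * cos ((a + 2 * a) / 2))
          - 13 = va)
    (hvb : 15625 * x ^ 6 - 9375 * x ^ 4
          - (4000 * (cos (b / 2) * cos (b / 2) * cos ((b + b) / 2)) + 1000) * x ^ 3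
          - (2400 * (cos (b / 2) * cos (b / 2) * cos ((b + b) / 2)) - 1275) * x ^ 2
          - (240 * (cos (b / 2) * cos (b / 2) * cos ((b + b) / 2))
              + 80 * (cos ((2 * b + b) / 2) * cos ((b - b) / 2) * cos ((b + 2 * b) / 2))
              - 200) * x
          + 8 * (cos b * cos b * cos (b + b))
          + 32 * (cos (b / 2) * cos (b / 2) * cos ((b + b) / 2))
          - 32 * (cos ((2 * b + b) / 2) * cos ((b - b) / 2) * cos ((b + 2 * b) / 2))
          - 13 = vb)
    (hmem : (0:ℝ) ∈ Set.uIcc va vb) :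
    ∃ θ₁ ∈ Set.Icc (-π) π, ∃ θ₂ ∈ Set.Icc (-π) π,
      15625 * x ^ 6 - 9375 * x ^ 4
            - (4000 * (cos (θ₁ / 2) * cos (θ₂ / 2) * cos ((θ₁ + θ₂) / 2)) + 1000) * x ^ 3
            - (2400 * (cos (θ₁ / 2) * cos (θ₂ / 2) * cos ((θ₁ + θ₂) / 2)) - 1275) * x ^ 2
            - (240 * (cos (θ₁ / 2) * cos (θ₂ / 2) * cos ((θ₁ + θ₂) / 2))
                + 80 * (cos ((2 * θ₁ + θ₂) / 2) * cos ((θ₂ - θ₁) / 2) * cos ((θ₁ + 2 * θ₂) / 2))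
                - 200) * x
            + 8 * (cos θ₁ * cos θ₂ * cos (θ₁ + θ₂))
            + 32 * (cos (θ₁ / 2) * cos (θ₂ / 2) * cos ((θ₁ + θ₂) / 2))
            - 32 * (cos ((2 * θ₁ + θ₂) / 2) * cos ((θ₂ - θ₁) / 2) * cos ((θ₁ + 2 * θ₂) / 2))
            - 13 = 0 := by
  have hpi := Real.pi_pos
  have hcont : Continuous (fun t : ℝ => 15625 * x ^ 6 - 9375 * x ^ 4
            - (4000 * (cos (t / 2) * cos (t / 2) * cos ((t + t) / 2)) + 1000) * x ^ 3
            - (2400 * (cos (t / 2) * cos (t / 2) * cos ((t + t) / 2)) - 1275) * x ^ 2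
            - (240 * (cos (t / 2) * cos (t / 2) * cos ((t + t) / 2))
                + 80 * (cos ((2 * t + t) / 2) * cos ((t - t) / 2) * cos ((t + 2 * t) / 2))
                - 200) * x
            + 8 * (cos t * cos t * cos (t + t))
            + 32 * (cos (t / 2) * cos (t / 2) * cos ((t + t) / 2))
            - 32 * (cos ((2 * t + t) / 2) * cos ((t - t) / 2) * cos ((t + 2 * t) / 2))
            - 13) := by fun_prop
  have h1 : (fun t : ℝ => 15625 * x ^ 6 - 9375 * x ^ 4
            - (4000 * (cos (t / 2) * cos (t / 2) * cos ((t + t) / 2)) + 1000) * x ^ 3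
            - (2400 * (cos (t / 2) * cos (t / 2) * cos ((t + t) / 2)) - 1275) * x ^ 2
            - (240 * (cos (t / 2) * cos (t / 2) * cos ((t + t) / 2))
                + 80 * (cos ((2 * t + t) / 2) * cos ((t - t) / 2) * cos ((t + 2 * t) / 2))
                - 200) * x
            + 8 * (cos t * cos t * cos (t + t))
            + 32 * (cos (t / 2) * cos (t / 2) * cos ((t + t) / 2))
            - 32 * (cos ((2 * t + t) / 2) * cos ((t - t) / 2) * cos ((t + 2 * t) / 2))
            - 13) a = va := hva
  have h2 : (fun t : ℝ => 15625 * x ^ 6 - 9375 * x ^ 4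
            - (4000 * (cos (t / 2) * cos (t / 2) * cos ((t + t) / 2)) + 1000) * x ^ 3
            - (2400 * (cos (t / 2) * cos (t / 2) * cos ((t + t) / 2)) - 1275) * x ^ 2
            - (240 * (cos (t / 2) * cos (t / 2) * cos ((t + t) / 2))
                + 80 * (cos ((2 * t + t) / 2) * cos ((t - t) / 2) * cos ((t + 2 * t) / 2))
                - 200) * x
            + 8 * (cos t * cos t * cos (t + t))
            + 32 * (cos (t / 2) * cos (t / 2) * cos ((t + t) / 2))
            - 32 * (cos ((2 * t + t) / 2) * cos ((t - t) / 2) * cos ((t + 2 * t) / 2))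
            - 13) b = vb := hvb
  rw [← h1, ← h2] at hmem
  obtain ⟨t, htmem, htval⟩ := intermediate_value_uIcc hcont.continuousOn hmem
  rw [Set.uIcc_of_le hab] at htmem
  exact ⟨t, Set.mem_Icc.mpr ⟨by linarith [htmem.1], by linarith [htmem.2]⟩,
    t, Set.mem_Icc.mpr ⟨by linarith [htmem.1], by linarith [htmem.2]⟩, htval⟩

private lemma ivt_anti (x b : ℝ) (hb0 : 0 ≤ b) (hb : b ≤ π)
    (va vb : ℝ)
    (hva : 15625 * x ^ 6 - 9375 * x ^ 4
          - (4000 * (cos (0 / 2) * cos ((-0) / 2) * cos ((0 + (-0)) / 2)) + 1000) * x ^ 3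
          - (2400 * (cos (0 / 2) * cos ((-0) / 2) * cos ((0 + (-0)) / 2)) - 1275) * x ^ 2
          - (240 * (cos (0 / 2) * cos ((-0) / 2) * cos ((0 + (-0)) / 2))
              + 80 * (cos ((2 * 0 + (-0)) / 2) * cos (((-0) - 0) / 2) * cos ((0 + 2 * (-0)) / 2))
              - 200) * x
          + 8 * (cos 0 * cos (-0) * cos (0 + (-0)))
          + 32 * (cos (0 / 2) * cos ((-0) / 2) * cos ((0 + (-0)) / 2))
          - 32 * (cos ((2 * 0 + (-0)) / 2) * cos (((-0) - 0) / 2) * cos ((0 + 2 * (-0)) / 2))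
          - 13 = va)
    (hvb : 15625 * x ^ 6 - 9375 * x ^ 4
          - (4000 * (cos (b / 2) * cos ((-b) / 2) * cos ((b + (-b)) / 2)) + 1000) * x ^ 3
          - (2400 * (cos (b / 2) * cos ((-b) / 2) * cos ((b + (-b)) / 2)) - 1275) * x ^ 2
          - (240 * (cos (b / 2) * cos ((-b) / 2) * cos ((b + (-b)) / 2))
              + 80 * (cos ((2 * b + (-b)) / 2) * cos (((-b) - b) / 2) * cos ((b + 2 * (-b)) / 2))
              - 200) * x
          + 8 * (cos b * cos (-b) * cos (b + (-b)))
          + 32 * (cos (b / 2) * cos ((-b) / 2) * cos ((b + (-b)) / 2))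
          - 32 * (cos ((2 * b + (-b)) / 2) * cos (((-b) - b) / 2) * cos ((b + 2 * (-b)) / 2))
          - 13 = vb)
    (hmem : (0:ℝ) ∈ Set.uIcc va vb) :
    ∃ θ₁ ∈ Set.Icc (-π) π, ∃ θ₂ ∈ Set.Icc (-π) π,
      15625 * x ^ 6 - 9375 * x ^ 4
            - (4000 * (cos (θ₁ / 2) * cos (θ₂ / 2) * cos ((θ₁ + θ₂) / 2)) + 1000) * x ^ 3
            - (2400 * (cos (θ₁ / 2) * cos (θ₂ / 2) * cos ((θ₁ + θ₂) / 2)) - 1275) * x ^ 2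
            - (240 * (cos (θ₁ / 2) * cos (θ₂ / 2) * cos ((θ₁ + θ₂) / 2))
                + 80 * (cos ((2 * θ₁ + θ₂) / 2) * cos ((θ₂ - θ₁) / 2) * cos ((θ₁ + 2 * θ₂) / 2))
                - 200) * x
            + 8 * (cos θ₁ * cos θ₂ * cos (θ₁ + θ₂))
            + 32 * (cos (θ₁ / 2) * cos (θ₂ / 2) * cos ((θ₁ + θ₂) / 2))
            - 32 * (cos ((2 * θ₁ + θ₂) / 2) * cos ((θ₂ - θ₁) / 2) * cos ((θ₁ + 2 * θ₂) / 2))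
            - 13 = 0 := by
  have hpi := Real.pi_pos
  have hcont : Continuous (fun s : ℝ => 15625 * x ^ 6 - 9375 * x ^ 4
            - (4000 * (cos (s / 2) * cos ((-s) / 2) * cos ((s + (-s)) / 2)) + 1000) * x ^ 3
            - (2400 * (cos (s / 2) * cos ((-s) / 2) * cos ((s + (-s)) / 2)) - 1275) * x ^ 2
            - (240 * (cos (s / 2) * cos ((-s) / 2) * cos ((s + (-s)) / 2))
                + 80 * (cos ((2 * s + (-s)) / 2) * cos (((-s) - s) / 2) * cos ((s + 2 * (-s)) / 2))
                - 200) * x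
            + 8 * (cos s * cos (-s) * cos (s + (-s)))
            + 32 * (cos (s / 2) * cos ((-s) / 2) * cos ((s + (-s)) / 2))
            - 32 * (cos ((2 * s + (-s)) / 2) * cos (((-s) - s) / 2) * cos ((s + 2 * (-s)) / 2))
            - 13) := by fun_prop
  have h1 : (fun s : ℝ => 15625 * x ^ 6 - 9375 * x ^ 4
            - (4000 * (cos (s / 2) * cos ((-s) / 2) * cos ((s + (-s)) / 2)) + 1000) * x ^ 3
            - (2400 * (cos (s / 2) * cos ((-s) / 2) * cos ((s + (-s)) / 2)) - 1275) * x ^ 2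
            - (240 * (cos (s / 2) * cos ((-s) / 2) * cos ((s + (-s)) / 2))
                + 80 * (cos ((2 * s + (-s)) / 2) * cos (((-s) - s) / 2) * cos ((s + 2 * (-s)) / 2))
                - 200) * x
            + 8 * (cos s * cos (-s) * cos (s + (-s)))
            + 32 * (cos (s / 2) * cos ((-s) / 2) * cos ((s + (-s)) / 2))
            - 32 * (cos ((2 * s + (-s)) / 2) * cos (((-s) - s) / 2) * cos ((s + 2 * (-s)) / 2))
            - 13) 0 = va := hva
  have h2 : (fun s : ℝ => 15625 * x ^ 6 - 9375 * x ^ 4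
            - (4000 * (cos (s / 2) * cos ((-s) / 2) * cos ((s + (-s)) / 2)) + 1000) * x ^ 3
            - (2400 * (cos (s / 2) * cos ((-s) / 2) * cos ((s + (-s)) / 2)) - 1275) * x ^ 2
            - (240 * (cos (s / 2) * cos ((-s) / 2) * cos ((s + (-s)) / 2))
                + 80 * (cos ((2 * s + (-s)) / 2) * cos (((-s) - s) / 2) * cos ((s + 2 * (-s)) / 2))
                - 200) * x
            + 8 * (cos s * cos (-s) * cos (s + (-s)))
            + 32 * (cos (s / 2) * cos ((-s) / 2) * cos ((s + (-s)) / 2))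
            - 32 * (cos ((2 * s + (-s)) / 2) * cos (((-s) - s) / 2) * cos ((s + 2 * (-s)) / 2))
            - 13) b = vb := hvb
  rw [← h1, ← h2] at hmem
  obtain ⟨t, htmem, htval⟩ := intermediate_value_uIcc hcont.continuousOn hmem
  rw [Set.uIcc_of_le hb0] at htmem
  exact ⟨t, Set.mem_Icc.mpr ⟨by linarith [htmem.1], by linarith [htmem.2]⟩,
    -t, Set.mem_Icc.mpr ⟨by linarith [htmem.1, htmem.2], by linarith [htmem.1]⟩, htval⟩

theorem ac_spectrum_snub_trihexagonal (x : ℝ) :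
    (∃ θ₁ ∈ Set.Icc (-π) π, ∃ θ₂ ∈ Set.Icc (-π) π,
        15625 * x ^ 6 - 9375 * x ^ 4
          - (4000 * (cos (θ₁ / 2) * cos (θ₂ / 2) * cos ((θ₁ + θ₂) / 2)) + 1000) * x ^ 3
          - (2400 * (cos (θ₁ / 2) * cos (θ₂ / 2) * cos ((θ₁ + θ₂) / 2)) - 1275) * x ^ 2
          - (240 * (cos (θ₁ / 2) * cos (θ₂ / 2) * cos ((θ₁ + θ₂) / 2))
              + 80 * (cos ((2 * θ₁ + θ₂) / 2) * cos ((θ₂ - θ₁) / 2) * cos ((θ₁ + 2 * θ₂) / 2))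
              - 200) * x
          + 8 * (cos θ₁ * cos θ₂ * cos (θ₁ + θ₂))
          + 32 * (cos (θ₁ / 2) * cos (θ₂ / 2) * cos ((θ₁ + θ₂) / 2))
          - 32 * (cos ((2 * θ₁ + θ₂) / 2) * cos ((θ₂ - θ₁) / 2) * cos ((θ₁ + 2 * θ₂) / 2))
          - 13 = 0)
    ↔ x ∈ Set.Icc (-((1 + Real.sqrt 3) / 5) : ℝ) 1 := by
  have hs3 : Real.sqrt 3 ^ 2 = 3 := Real.sq_sqrt (by norm_num)
  have hs3nn : (0:ℝ) ≤ Real.sqrt 3 := Real.sqrt_nonneg 3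
  have hs3gt : (1:ℝ) < Real.sqrt 3 := by nlinarith
  have hs3lt : Real.sqrt 3 < 2 := by nlinarith
  have hpi := Real.pi_pos
  constructor
  · rintro ⟨θ₁, hθ₁, θ₂, hθ₂, heq⟩
    rw [key_ident] at heq
    have hw3 : 2 * (cos (θ₁ / 2) * cos (θ₂ / 2) * cos ((θ₁ + θ₂) / 2)) ^ 2
        - cos (θ₁ / 2) * cos (θ₂ / 2) * cos ((θ₁ + θ₂) / 2)
        + 2 * (sin (θ₁ / 2) * sin (θ₂ / 2) * sin ((θ₁ + θ₂) / 2)) ^ 2 ≤ 1 := by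
      have h := triple_cos_le_one ((2 * θ₁ + θ₂) / 2) ((θ₂ - θ₁) / 2) ((θ₁ + 2 * θ₂) / 2)
      rw [omega3_eq] at h
      exact h
    have hW1 : -(1 / 8 : ℝ) ≤ cos (θ₁ / 2) * cos (θ₂ / 2) * cos ((θ₁ + θ₂) / 2) := W_lb θ₁ θ₂
    have hW2 : cos (θ₁ / 2) * cos (θ₂ / 2) * cos ((θ₁ + θ₂) / 2) ≤ 1 := triple_cos_le_one _ _ _
    set W := cos (θ₁ / 2) * cos (θ₂ / 2) * cos ((θ₁ + θ₂) / 2) with hWdef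
    set m := sin (θ₁ / 2) * sin (θ₂ / 2) * sin ((θ₁ + θ₂) / 2) with hmdef
    rw [Set.mem_Icc]
    constructor
    · by_contra hcon
      push_neg at hcon
      have hy : 5 * x < -1 - Real.sqrt 3 := by linarith
      rcases le_or_gt x (-(3/5) : ℝ) with hx3 | hx3
      · -- 5x ≤ -3
        have hT1 : (0:ℝ) ≤ (-32 * (5 * x + 1)) * (W + 1/8) ^ 2 :=
          mul_nonneg (by linarith) (sq_nonneg _)
        have hb : (0:ℝ) ≤ 25 * x ^ 2 + 10 * x - 5/4 := by nlinarith [sq_nonneg (5*x+3)]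
        have hT2 : (0:ℝ) ≤ (-32 * (5 * x + 1)) * ((25 * x ^ 2 + 10 * x - 5/4) * (W + 1/8)) :=
          mul_nonneg (by linarith) (mul_nonneg hb (by linarith))
        have hT3 : (0:ℝ) ≤ (-32 * (5 * x + 3)) * m ^ 2 :=
          mul_nonneg (by linarith) (sq_nonneg m)
        have ht : (0:ℝ) ≤ -3 - 5 * x := by linarith
        have hg : (5*x)^5 - (5*x)^4 - 14*(5*x)^3 + 10*(5*x)^2 + 53*(5*x) - 19/2 < 0 := by
          nlinarith [ht, mul_nonneg ht ht, mul_nonneg (mul_nonneg ht ht) ht,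
            mul_nonneg (mul_nonneg (mul_nonneg ht ht) ht) ht,
            mul_nonneg (mul_nonneg (mul_nonneg (mul_nonneg ht ht) ht) ht) ht]
        have hT4 : (0:ℝ) < (5*x+1) * ((5*x)^5 - (5*x)^4 - 14*(5*x)^3 + 10*(5*x)^2 + 53*(5*x) - 19/2) :=
          mul_pos_of_neg_of_neg (by linarith) hg
        have hid : -32 * (5 * x + 1) * W ^ 2
            - 32 * (5 * x + 1) * (25 * x ^ 2 + 10 * x - 1) * W
            - 32 * (5 * x + 3) * m ^ 2
            + (5 * x + 1) * (25 * x ^ 2 - 5) * (125 * x ^ 3 - 25 * x ^ 2 - 45 * x + 1)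
            = (-32 * (5 * x + 1)) * (W + 1/8) ^ 2
              + (-32 * (5 * x + 1)) * ((25 * x ^ 2 + 10 * x - 5/4) * (W + 1/8))
              + (-32 * (5 * x + 3)) * m ^ 2
              + (5*x+1) * ((5*x)^5 - (5*x)^4 - 14*(5*x)^3 + 10*(5*x)^2 + 53*(5*x) - 19/2) := by
          ring
        linarith [heq, hT1, hT2, hT3, hT4, hid]
      · -- -3 < 5x < -1-√3
        have hq : (0:ℝ) < (5*x)^2 + (2 - Real.sqrt 3) * (5*x) + (5/2 - Real.sqrt 3) := by
          nlinarith [sq_nonneg (2*(5*x) + 2 - Real.sqrt 3)]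
        have hprod : (5*x + 1 + Real.sqrt 3) * ((5*x)^2 + (2 - Real.sqrt 3)*(5*x) + (5/2 - Real.sqrt 3)) ≤ 0 := by
          nlinarith [mul_pos (by linarith : (0:ℝ) < -(5*x + 1 + Real.sqrt 3)) hq]
        have hfneg : 32 * (5*x)^3 + 96 * (5*x)^2 + 48 * (5*x) + 32 ≤ 0 := by
          have hfact : 32 * (5*x)^3 + 96 * (5*x)^2 + 48 * (5*x) + 32
              = 32 * ((5*x + 1 + Real.sqrt 3) * ((5*x)^2 + (2 - Real.sqrt 3)*(5*x) + (5/2 - Real.sqrt 3))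
                  + (3/2) * (1 - Real.sqrt 3))
                + 32 * (Real.sqrt 3 ^ 2 - 3) * (5*x + 1) := by ring
          rw [hs3] at hfact
          nlinarith [hprod]
        have hT2 : (0:ℝ) ≤ (-(32 * (5*x)^3 + 96 * (5*x)^2 + 48 * (5*x) + 32)) * (W + 1/8) :=
          mul_nonneg (by linarith) (by linarith)
        have hT3 : (0:ℝ) ≤ 16 * (5*x+3) * (1 - (2*W^2 - W + 2*m^2)) :=
          mul_nonneg (by linarith) (by linarith)
        have h4a : (0:ℝ) < 25*x^2 - 5*x - 5 := by
          nlinarith [hy, sq_nonneg (5*x + 1 + Real.sqrt 3)]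
        have h4b : (0:ℝ) < 25*x^2 + 10*x - 2 := by
          nlinarith [hy, mul_pos (by linarith : (0:ℝ) < -(5*x+1) - Real.sqrt 3)
            (by linarith : (0:ℝ) < -(5*x+1) + Real.sqrt 3)]
        have hT4 : (0:ℝ) < (25*x^2 - 5*x - 5)^2 * (25*x^2 + 10*x - 2) :=
          mul_pos (pow_pos h4a 2) h4b
        have hid : -32 * (5 * x + 1) * W ^ 2
            - 32 * (5 * x + 1) * (25 * x ^ 2 + 10 * x - 1) * W
            - 32 * (5 * x + 3) * m ^ 2
            + (5 * x + 1) * (25 * x ^ 2 - 5) * (125 * x ^ 3 - 25 * x ^ 2 - 45 * x + 1)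
            = 64 * (W + 1/8)^2
              + (-(32 * (5*x)^3 + 96 * (5*x)^2 + 48 * (5*x) + 32)) * (W + 1/8)
              + 16 * (5*x+3) * (1 - (2*W^2 - W + 2*m^2))
              + (25*x^2 - 5*x - 5)^2 * (25*x^2 + 10*x - 2) := by ring
        linarith [heq, sq_nonneg (W + 1/8), hT2, hT3, hT4, hid]
    · by_contra hcon
      push_neg at hcon
      have hB : (0:ℝ) ≤ 32 * (5*x)^3 + 96 * (5*x)^2 + 48 * (5*x) - 112 := by
        nlinarith [hcon, sq_nonneg (x - 1), mul_pos (by linarith : (0:ℝ) < x - 1)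
          (by linarith : (0:ℝ) < x - 1)]
      have hT2 : (0:ℝ) ≤ (32 * (5*x)^3 + 96 * (5*x)^2 + 48 * (5*x) - 112) * (1 - W) :=
        mul_nonneg hB (by linarith)
      have hT3 : (0:ℝ) ≤ 16 * (5*x+3) * (1 - (2*W^2 - W + 2*m^2)) :=
        mul_nonneg (by linarith) (by linarith)
      have hT4 : (0:ℝ) < (5*x - 5) * (5*x + 1)^5 :=
        mul_pos (by linarith) (pow_pos (by linarith) 5)
      have hid : -32 * (5 * x + 1) * W ^ 2
          - 32 * (5 * x + 1) * (25 * x ^ 2 + 10 * x - 1) * W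
          - 32 * (5 * x + 3) * m ^ 2
          + (5 * x + 1) * (25 * x ^ 2 - 5) * (125 * x ^ 3 - 25 * x ^ 2 - 45 * x + 1)
          = 64 * (W - 1)^2
            + (32 * (5*x)^3 + 96 * (5*x)^2 + 48 * (5*x) - 112) * (1 - W)
            + 16 * (5*x+3) * (1 - (2*W^2 - W + 2*m^2))
            + (5*x - 5) * (5*x + 1)^5 := by ring
      linarith [heq, sq_nonneg (W - 1), hT2, hT3, hT4, hid]
  · rintro ⟨hx1, hx2⟩
    have hs2 : Real.sqrt 2 ^ 2 = 2 := Real.sq_sqrt (by norm_num)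
    have hs2nn : (0:ℝ) ≤ Real.sqrt 2 := Real.sqrt_nonneg 2
    have hs2gt : (7:ℝ)/5 < Real.sqrt 2 := by nlinarith
    have hs2lt : Real.sqrt 2 < 3/2 := by nlinarith
    rcases le_or_gt x (-(1/5) : ℝ) with hc1 | hc1
    · -- case 1 : diagonal, t ∈ [0, 2π/3], value ≥ 0 at 0, ≤ 0 at 2π/3
      refine ivt_diag x 0 (2*π/3) le_rfl (by positivity) (by linarith)
        _ _ (diag_val_zero x) (diag_val_K x) (Set.mem_uIcc.mpr (Or.inr ⟨?_, ?_⟩))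
      · have hb : 25*x^2 + 10*x - 2 ≤ 0 := by
          nlinarith [hs3, mul_nonneg (by linarith : (0:ℝ) ≤ 5*x + 1 + Real.sqrt 3)
            (by linarith : (0:ℝ) ≤ -(5*x + 1 - Real.sqrt 3))]
        nlinarith [mul_nonneg (sq_nonneg (25*x^2 - 5*x - 5))
          (by linarith : (0:ℝ) ≤ -(25*x^2 + 10*x - 2))]
      · have h5 : (5*x + 1)^5 ≤ 0 := Odd.pow_nonpos (by decide) (by linarith)
        nlinarith [mul_nonneg (by linarith : (0:ℝ) ≤ 5 - 5*x)
          (by linarith : (0:ℝ) ≤ -(5*x + 1)^5)]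
    rcases le_or_gt x ((Real.sqrt 2 - 1)/5) with hc2 | hc2
    · -- case 2 : anti-diagonal
      have hu1 : (-1:ℝ) ≤ -(25*x^2 + 10*x) := by
        nlinarith [hs2, mul_le_mul (by linarith : 5*x + 1 ≤ Real.sqrt 2)
          (by linarith : 5*x + 1 ≤ Real.sqrt 2) (by linarith : (0:ℝ) ≤ 5*x + 1) hs2nn]
      have hu2 : -(25*x^2 + 10*x) ≤ 1 := by nlinarith [sq_nonneg (5*x + 1)]
      have hp5 : (0:ℝ) < (5*x + 1)^5 := pow_pos (by linarith) 5
      refine ivt_anti x (Real.arccos (-(25*x^2 + 10*x))) (Real.arccos_nonneg _)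
        (Real.arccos_le_pi _) _ _ (anti_val_zero x)
        (anti_val x _ (Real.cos_arccos hu1 hu2)) (Set.mem_uIcc.mpr (Or.inl ⟨?_, ?_⟩))
      · nlinarith [mul_nonneg (by linarith : (0:ℝ) ≤ 5 - 5*x) hp5.le]
      · nlinarith [mul_nonneg hp5.le (by linarith : (0:ℝ) ≤ 5*x + 3)]
    rcases le_or_gt x ((Real.sqrt 3 - 1)/5) with hc3 | hc3
    · -- case 3 : diagonal, t ∈ [2π/3, π], value ≤ 0 at 2π/3, ≥ 0 at π
      have hx0 : (0:ℝ) < 5*x := by nlinarith [hs2gt]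
      have hxle : 5*x ≤ 1 := by nlinarith [hs3lt]
      refine ivt_diag x (2*π/3) π (by positivity) (by linarith) le_rfl
        _ _ (diag_val_K x) (diag_val_pi x) (Set.mem_uIcc.mpr (Or.inl ⟨?_, ?_⟩))
      · have hb : 25*x^2 + 10*x - 2 ≤ 0 := by
          nlinarith [hs3, mul_nonneg (by linarith : (0:ℝ) ≤ 5*x + 1 + Real.sqrt 3)
            (by linarith : (0:ℝ) ≤ -(5*x + 1 - Real.sqrt 3))]
        nlinarith [mul_nonneg (sq_nonneg (25*x^2 - 5*x - 5))
          (by linarith : (0:ℝ) ≤ -(25*x^2 + 10*x - 2))]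
      · have ha : 25*x^2 - 5 ≤ 0 := by nlinarith
        have hcub : 125*x^3 - 25*x^2 - 45*x + 1 ≤ 0 := by
          nlinarith [hs2gt, mul_pos hx0 hx0, mul_nonneg (mul_nonneg hx0.le hx0.le) hx0.le,
            mul_nonneg (by linarith : (0:ℝ) ≤ 1 - 5*x) (mul_nonneg hx0.le hx0.le)]
        nlinarith [mul_nonneg (mul_nonneg (by linarith : (0:ℝ) ≤ 5 - 25*x^2)
          (by linarith : (0:ℝ) ≤ 5*x + 1))
          (by linarith : (0:ℝ) ≤ -(125*x^3 - 25*x^2 - 45*x + 1))]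
    · -- case 4 : diagonal, t ∈ [0, 2π/3], value ≤ 0 at 0, ≥ 0 at 2π/3
      refine ivt_diag x 0 (2*π/3) le_rfl (by positivity) (by linarith)
        _ _ (diag_val_zero x) (diag_val_K x) (Set.mem_uIcc.mpr (Or.inl ⟨?_, ?_⟩))
      · have hp5 : (0:ℝ) < (5*x + 1)^5 := pow_pos (by nlinarith) 5
        nlinarith [mul_nonneg (by linarith : (0:ℝ) ≤ 5 - 5*x) hp5.le]
      · have hb : 0 ≤ 25*x^2 + 10*x - 2 := by
          nlinarith [hs3, mul_le_mul (by linarith : Real.sqrt 3 ≤ 5*x + 1)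
            (by linarith : Real.sqrt 3 ≤ 5*x + 1) hs3nn (by linarith : (0:ℝ) ≤ 5*x + 1)]
        nlinarith [mul_nonneg (sq_nonneg (25*x^2 - 5*x - 5)) hb]
end

section
/- For every real number x, there exist θ₁, θ₂ ∈ [−π, π] such that x⁶ − 18x⁵ + 111x⁴ − (48ω̃₂ + 268)x³ + (240ω̃₂ + 207)x² − (32ω̃₃ + 240ω̃₂ + 34)x + 8ω̃₁ + 64ω̃₂ + 16ω̃₃ − 7 = 0, if and only if x ∈ [0, 1] ∪ [3, 9]. -/
open Real

set_option maxHeartbeats 1000000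

/-- The dispersion polynomial expressed through `p = cosθ₁+cosθ₂+cos(θ₁-θ₂)` and
`r = cosθ₁·cosθ₂·cos(θ₁-θ₂)`. -/
def Pdisp (x p r : ℝ) : ℝ :=
  x ^ 6 - 18 * x ^ 5 + 111 * x ^ 4 - 280 * x ^ 3 + 267 * x ^ 2 - 94 * x + 9
    + 4 * p ^ 2 - 8 * x * p ^ 2 - 12 * x ^ 3 * p + 60 * x ^ 2 * p - 52 * x * p + 12 * p
    + 16 * x * r

lemma rep (x θ₁ θ₂ : ℝ) :
    x ^ 6 - 18 * x ^ 5 + 111 * x ^ 4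
      - (48 * (cos (θ₁ / 2) * cos (θ₂ / 2) * cos ((θ₁ - θ₂) / 2)) + 268) * x ^ 3
      + (240 * (cos (θ₁ / 2) * cos (θ₂ / 2) * cos ((θ₁ - θ₂) / 2)) + 207) * x ^ 2
      - (32 * (cos ((2 * θ₁ - θ₂) / 2) * cos ((θ₁ + θ₂) / 2) * cos ((θ₁ - 2 * θ₂) / 2))
          + 240 * (cos (θ₁ / 2) * cos (θ₂ / 2) * cos ((θ₁ - θ₂) / 2)) + 34) * x
      + 8 * (cos θ₁ * cos θ₂ * cos (θ₁ - θ₂))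
      + 64 * (cos (θ₁ / 2) * cos (θ₂ / 2) * cos ((θ₁ - θ₂) / 2))
      + 16 * (cos ((2 * θ₁ - θ₂) / 2) * cos ((θ₁ + θ₂) / 2) * cos ((θ₁ - 2 * θ₂) / 2))
      - 7
    = Pdisp x (cos θ₁ + cos θ₂ + cos (θ₁ - θ₂)) (cos θ₁ * cos θ₂ * cos (θ₁ - θ₂)) := by
  obtain ⟨a, rfl⟩ : ∃ a, θ₁ = 2 * a := ⟨θ₁ / 2, by ring⟩
  obtain ⟨b, rfl⟩ : ∃ b, θ₂ = 2 * b := ⟨θ₂ / 2, by ring⟩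
  rw [show 2 * a / 2 = a by ring, show 2 * b / 2 = b by ring,
    show (2 * a - 2 * b) / 2 = a - b by ring,
    show (2 * (2 * a) - 2 * b) / 2 = 2 * a - b by ring,
    show (2 * a + 2 * b) / 2 = a + b by ring,
    show (2 * a - 2 * (2 * b)) / 2 = a - 2 * b by ring]
  simp only [Pdisp, cos_sub, cos_add, cos_two_mul, sin_two_mul]
  linear_combination
    (32 * cos b ^ 2 * sin b ^ 2 - 64 * cos a * sin a * cos b * sin b ^ 3
      + 32 * cos a ^ 2 * sin b ^ 2 - 128 * cos a ^ 2 * cos b ^ 2 * sin b ^ 2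
      - 64 * x * cos b ^ 2 * sin b ^ 2 + 128 * x * cos a * sin a * cos b * sin b ^ 3
      - 64 * x * cos a ^ 2 * sin b ^ 2 + 256 * x * cos a ^ 2 * cos b ^ 2 * sin b ^ 2)
        * sin_sq_add_cos_sq a +
    (32 * cos b ^ 2 - 64 * cos a * sin a * cos b * sin b + 32 * cos a ^ 2
      - 160 * cos a ^ 2 * cos b ^ 2 + 64 * cos a ^ 3 * sin a * cos b * sin b
      - 32 * cos a ^ 4 + 128 * cos a ^ 4 * cos b ^ 2 - 64 * x * cos b ^ 2
      + 128 * x * cos a * sin a * cos b * sin b - 64 * x * cos a ^ 2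
      + 320 * x * cos a ^ 2 * cos b ^ 2 - 128 * x * cos a ^ 3 * sin a * cos b * sin b
      + 64 * x * cos a ^ 4 - 256 * x * cos a ^ 4 * cos b ^ 2) * sin_sq_add_cos_sq b

/-- Forward direction at the `(p,r)` level. -/
lemma bands_of_root (x p r : ℝ) (hp : -(3/2) ≤ p) (hp3 : p ≤ 3) (hr1 : r ≤ 1)
    (hF1 : 4 * r ≤ (p - 1) ^ 2) (hF3 : p ^ 2 ≤ 6 * r + 3) (heq : Pdisp x p r = 0) :
    x ∈ Set.Icc (0 : ℝ) 1 ∪ Set.Icc (3 : ℝ) 9 := by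
  simp only [Pdisp] at heq
  rcases lt_or_ge x 0 with hx0 | hx0
  · exfalso
    have hx3 : (0:ℝ) ≤ -x ^ 3 := by nlinarith [sq_nonneg x]
    have hx5 : (0:ℝ) ≤ -x ^ 5 := by nlinarith [sq_nonneg (x ^ 2)]
    have h1 : (0:ℝ) ≤ (2 * p + 3) ^ 2 * (1 - 2 * x) :=
      mul_nonneg (sq_nonneg _) (by linarith)
    have h2 : (0:ℝ) ≤ (-14 * x) * (2 * p + 3) :=
      mul_nonneg (by linarith) (by linarith)
    have h3 : (0:ℝ) < -18 * x := by linarith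
    have h4 : (0:ℝ) ≤ 30 * x ^ 2 * (2 * p + 3) :=
      mul_nonneg (by positivity) (by linarith)
    have h5 : (0:ℝ) ≤ 177 * x ^ 2 := by positivity
    have h6 : (0:ℝ) ≤ (-6 * x ^ 3) * (2 * p + 3) :=
      mul_nonneg (by linarith) (by linarith)
    have h7 : (0:ℝ) ≤ -262 * x ^ 3 := by linarith
    have h8 : (0:ℝ) ≤ 111 * x ^ 4 := by positivity
    have h9 : (0:ℝ) ≤ -18 * x ^ 5 := by linarith
    have h10 : (0:ℝ) ≤ x ^ 6 := by positivity
    have h11 : (0:ℝ) ≤ (-16 * x) * (1 - r) :=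
      mul_nonneg (by linarith) (by linarith)
    have hsum : (2 * p + 3) ^ 2 * (1 - 2 * x) + (-14 * x) * (2 * p + 3) + (-18 * x)
        + 30 * x ^ 2 * (2 * p + 3) + 177 * x ^ 2 + (-6 * x ^ 3) * (2 * p + 3)
        + (-262 * x ^ 3) + 111 * x ^ 4 + (-18 * x ^ 5) + x ^ 6
        + (-16 * x) * (1 - r) = 0 := by linear_combination heq
    linarith
  · rcases le_or_gt x 1 with hx1 | hx1
    · exact Or.inl ⟨hx0, hx1⟩
    · rcases lt_or_ge x 3 with hx3 | hx3
      · exfalso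
        have hfac2 : (0:ℝ) ≤ -(p + 3 * x ^ 2 - 12 * x + 6) := by
          nlinarith [mul_nonneg (by linarith : (0:ℝ) ≤ x - 1) (by linarith : (0:ℝ) ≤ 3 - x)]
        have hT1 : 4 * (x - 1) * (3 - p) * (p + 3 * x ^ 2 - 12 * x + 6) ≤ 0 := by
          nlinarith [mul_nonneg (mul_nonneg (by linarith : (0:ℝ) ≤ 4 * (x - 1))
            (by linarith : (0:ℝ) ≤ 3 - p)) hfac2]
        have hT2 : 4 * x * (4 * r - (p - 1) ^ 2) ≤ 0 := by
          nlinarith [mul_nonneg (by linarith : (0:ℝ) ≤ 4 * x)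
            (by linarith : (0:ℝ) ≤ (p - 1) ^ 2 - 4 * r)]
        have hsq : (0:ℝ) < (x - 3) ^ 2 := by
          nlinarith [mul_pos (show (0:ℝ) < 3 - x by linarith) (show (0:ℝ) < 3 - x by linarith)]
        have hcube : (0:ℝ) < (x - 1) ^ 3 := pow_pos (by linarith) 3
        have hf1 : (x - 1) ^ 3 * (x - 3) ^ 2 * (x - 9) < 0 := by
          nlinarith [mul_pos (mul_pos hcube hsq) (show (0:ℝ) < 9 - x by linarith)]
        have hid : (x - 1) ^ 3 * (x - 3) ^ 2 * (x - 9)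
            + 4 * (x - 1) * (3 - p) * (p + 3 * x ^ 2 - 12 * x + 6)
            + 4 * x * (4 * r - (p - 1) ^ 2) = 0 := by linear_combination heq
        linarith
      · rcases le_or_gt x 9 with hx9 | hx9
        · exact Or.inr ⟨hx3, hx9⟩
        · exfalso
          have h9p : (0:ℝ) ≤ (9 - p ^ 2) * (16 * x - 12) :=
            mul_nonneg (by nlinarith) (by linarith)
          have hcub : (0:ℝ) < 12 * x ^ 3 - 60 * x ^ 2 + 52 * x - 12 := by
            nlinarith [mul_nonneg (sq_nonneg x) (by linarith : (0:ℝ) ≤ x - 9), sq_nonneg x]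
          have h3p : (0:ℝ) ≤ 3 * (3 - p) * (12 * x ^ 3 - 60 * x ^ 2 + 52 * x - 12) :=
            mul_nonneg (by linarith) hcub.le
          have h8x : (0:ℝ) ≤ 8 * x * (6 * r - p ^ 2 + 3) :=
            mul_nonneg (by linarith) (by linarith)
          have hf1 : (0:ℝ) < 3 * ((x - 1) ^ 3 * (x - 3) ^ 2 * (x - 9)) := by
            nlinarith [mul_pos (mul_pos (pow_pos (show (0:ℝ) < x - 1 by linarith) 3)
              (pow_pos (show (0:ℝ) < x - 3 by linarith) 2))
              (show (0:ℝ) < x - 9 by linarith)]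
          have hid : 3 * ((x - 1) ^ 3 * (x - 3) ^ 2 * (x - 9))
              + (9 - p ^ 2) * (16 * x - 12)
              + 3 * (3 - p) * (12 * x ^ 3 - 60 * x ^ 2 + 52 * x - 12)
              + 8 * x * (6 * r - p ^ 2 + 3) = 0 := by linear_combination 3 * heq
          linarith

/-- Anti-diagonal family `θ₁ = t, θ₂ = -t`. -/
noncomputable def fAnti (x t : ℝ) : ℝ :=
  Pdisp x (cos t + cos t + (2 * cos t ^ 2 - 1)) (cos t * cos t * (2 * cos t ^ 2 - 1))

/-- Diagonal family `θ₁ = θ₂ = t`. -/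
noncomputable def fDiag (x t : ℝ) : ℝ :=
  Pdisp x (cos t + cos t + 1) (cos t * cos t * 1)

lemma fAnti_cont (x : ℝ) : Continuous (fAnti x) := by
  unfold fAnti Pdisp; fun_prop

lemma fDiag_cont (x : ℝ) : Continuous (fDiag x) := by
  unfold fDiag Pdisp; fun_prop

lemma fAnti_zero (x : ℝ) : fAnti x 0 = (x - 1) ^ 3 * (x - 3) ^ 2 * (x - 9) := by
  unfold fAnti Pdisp; rw [cos_zero]; ring

lemma fDiag_zero (x : ℝ) : fDiag x 0 = (x - 1) ^ 3 * (x - 3) ^ 2 * (x - 9) := by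
  unfold fDiag Pdisp; rw [cos_zero]; ring

lemma cos_two_pi_div_three : cos (2 * π / 3) = -(1/2) := by
  rw [show 2 * π / 3 = π - π / 3 by ring, cos_pi_sub, cos_pi_div_three]

lemma fAnti_twothirds (x : ℝ) :
    fAnti x (2 * π / 3) = x * (x - 4) * (x ^ 2 - 7 * x + 3) ^ 2 := by
  unfold fAnti Pdisp; rw [cos_two_pi_div_three]; ring

lemma fDiag_pi (x : ℝ) :
    fDiag x π = x ^ 6 - 18 * x ^ 5 + 111 * x ^ 4 - 268 * x ^ 3 + 207 * x ^ 2 - 34 * x + 1 := by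
  unfold fDiag Pdisp; rw [cos_pi]; ring

theorem ac_spectrum_truncated_trihexagonal (x : ℝ) :
    (∃ θ₁ ∈ Set.Icc (-π) π, ∃ θ₂ ∈ Set.Icc (-π) π,
        x ^ 6 - 18 * x ^ 5 + 111 * x ^ 4
          - (48 * (cos (θ₁ / 2) * cos (θ₂ / 2) * cos ((θ₁ - θ₂) / 2)) + 268) * x ^ 3
          + (240 * (cos (θ₁ / 2) * cos (θ₂ / 2) * cos ((θ₁ - θ₂) / 2)) + 207) * x ^ 2
          - (32 * (cos ((2 * θ₁ - θ₂) / 2) * cos ((θ₁ + θ₂) / 2) * cos ((θ₁ - 2 * θ₂) / 2))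
              + 240 * (cos (θ₁ / 2) * cos (θ₂ / 2) * cos ((θ₁ - θ₂) / 2)) + 34) * x
          + 8 * (cos θ₁ * cos θ₂ * cos (θ₁ - θ₂))
          + 64 * (cos (θ₁ / 2) * cos (θ₂ / 2) * cos ((θ₁ - θ₂) / 2))
          + 16 * (cos ((2 * θ₁ - θ₂) / 2) * cos ((θ₁ + θ₂) / 2) * cos ((θ₁ - 2 * θ₂) / 2))
          - 7 = 0)
    ↔ x ∈ Set.Icc (0 : ℝ) 1 ∪ Set.Icc (3 : ℝ) 9 := by
  have hπ := pi_pos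
  constructor
  · rintro ⟨θ₁, -, θ₂, -, heq⟩
    rw [rep] at heq
    have hc1a := neg_one_le_cos θ₁
    have hc1b := cos_le_one θ₁
    have hc2a := neg_one_le_cos θ₂
    have hc2b := cos_le_one θ₂
    have hc3a := neg_one_le_cos (θ₁ - θ₂)
    have hc3b := cos_le_one (θ₁ - θ₂)
    have hE : cos θ₁ ^ 2 + cos θ₂ ^ 2 + cos (θ₁ - θ₂) ^ 2
        = 1 + 2 * (cos θ₁ * cos θ₂ * cos (θ₁ - θ₂)) := by
      rw [cos_sub]
      linear_combination sin θ₂ ^ 2 * sin_sq_add_cos_sq θ₁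
        + (1 - cos θ₁ ^ 2) * sin_sq_add_cos_sq θ₂
    have hp : -(3/2) ≤ cos θ₁ + cos θ₂ + cos (θ₁ - θ₂) := by
      nlinarith [sq_nonneg (1 + cos θ₁ + cos θ₂), sq_nonneg (sin θ₁ + sin θ₂),
        sin_sq_add_cos_sq θ₁, sin_sq_add_cos_sq θ₂, cos_sub θ₁ θ₂]
    have hp3 : cos θ₁ + cos θ₂ + cos (θ₁ - θ₂) ≤ 3 := by linarith
    have hm1 : cos θ₁ * cos θ₂ ≤ 1 := by nlinarith
    have hm2 : -1 ≤ cos θ₁ * cos θ₂ := by nlinarith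
    have hr1 : cos θ₁ * cos θ₂ * cos (θ₁ - θ₂) ≤ 1 := by nlinarith
    have hF1 : 4 * (cos θ₁ * cos θ₂ * cos (θ₁ - θ₂))
        ≤ (cos θ₁ + cos θ₂ + cos (θ₁ - θ₂) - 1) ^ 2 := by
      nlinarith [mul_nonneg (mul_nonneg (by linarith : (0:ℝ) ≤ 1 - cos θ₁)
        (by linarith : (0:ℝ) ≤ 1 - cos θ₂)) (by linarith : (0:ℝ) ≤ 1 - cos (θ₁ - θ₂)), hE]
    have hF3 : (cos θ₁ + cos θ₂ + cos (θ₁ - θ₂)) ^ 2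
        ≤ 6 * (cos θ₁ * cos θ₂ * cos (θ₁ - θ₂)) + 3 := by
      nlinarith [sq_nonneg (cos θ₁ - cos θ₂), sq_nonneg (cos θ₁ - cos (θ₁ - θ₂)),
        sq_nonneg (cos θ₂ - cos (θ₁ - θ₂)), hE]
    exact bands_of_root x _ _ hp hp3 hr1 hF1 hF3 heq
  · intro hx
    rcases hx with hx | hx
    · -- x ∈ [0,1] : anti-diagonal family between t = 0 and t = 2π/3
      obtain ⟨hx0, hx1⟩ := Set.mem_Icc.mp hx
      have hends : (0:ℝ) ∈ Set.uIcc (fAnti x 0) (fAnti x (2 * π / 3)) := by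
        rw [Set.mem_uIcc]
        right
        constructor
        · rw [fAnti_twothirds]
          nlinarith [mul_nonneg (mul_nonneg hx0 (by linarith : (0:ℝ) ≤ 4 - x))
            (sq_nonneg (x ^ 2 - 7 * x + 3))]
        · rw [fAnti_zero]
          nlinarith [mul_nonneg (mul_nonneg (mul_nonneg (sq_nonneg (x - 1))
            (sq_nonneg (x - 3))) (by linarith : (0:ℝ) ≤ 1 - x))
            (by linarith : (0:ℝ) ≤ 9 - x)]
      obtain ⟨t, ht, hft⟩ := intermediate_value_uIcc ((fAnti_cont x).continuousOn) hends
      rw [Set.uIcc_of_le (by positivity)] at ht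
      obtain ⟨ht0, ht1⟩ := ht
      refine ⟨t, ⟨by linarith, by linarith⟩, -t, ⟨by linarith, by linarith⟩, ?_⟩
      rw [rep, cos_neg, show t - -t = 2 * t by ring, cos_two_mul]
      exact hft
    · obtain ⟨hx3, hx9⟩ := Set.mem_Icc.mp hx
      rcases le_or_gt x 4 with hx4 | hx4
      · rcases le_or_gt x (15/4) with hx154 | hx154
        · -- x ∈ [3, 15/4] : diagonal family between t = 0 and the vertex point
          have hx1 : (0:ℝ) < x - 1 := by linarith
          have ha : (0:ℝ) ≤ x - 3 := by linarith
          have hb : (0:ℝ) ≤ 15/4 - x := by linarith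
          have hq1 : (0:ℝ) ≤ -48 * x ^ 3 + 240 * x ^ 2 - 208 * x + 16 := by
            nlinarith [mul_nonneg ha hb, mul_nonneg (mul_nonneg ha ha) hb]
          have hq1' : -48 * x ^ 3 + 240 * x ^ 2 - 208 * x + 16 ≤ 128 * (x - 1) := by
            nlinarith [mul_nonneg (sq_nonneg (x - 1)) ha]
          set Cs : ℝ := (-48 * x ^ 3 + 240 * x ^ 2 - 208 * x + 16) / (64 * (x - 1)) - 1 with hCs
          have hden : (0:ℝ) < 64 * (x - 1) := by linarith
          have hCs1 : -1 ≤ Cs := by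
            rw [hCs]
            have : (0:ℝ) ≤ (-48 * x ^ 3 + 240 * x ^ 2 - 208 * x + 16) / (64 * (x - 1)) :=
              div_nonneg hq1 hden.le
            linarith
          have hCs2 : Cs ≤ 1 := by
            rw [hCs]
            have : (-48 * x ^ 3 + 240 * x ^ 2 - 208 * x + 16) / (64 * (x - 1)) ≤ 2 := by
              rw [div_le_iff₀ hden]
              linarith
            linarith
          have hvertex : fDiag x (arccos Cs) = x * (x - 1) ^ 3 * (x - 3) ^ 2 := by
            unfold fDiag Pdisp
            rw [cos_arccos hCs1 hCs2, hCs]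
            have hne : (64 : ℝ) * (x - 1) ≠ 0 := ne_of_gt hden
            field_simp
            ring
          have hends : (0:ℝ) ∈ Set.uIcc (fDiag x 0) (fDiag x (arccos Cs)) := by
            rw [Set.mem_uIcc]
            left
            constructor
            · rw [fDiag_zero]
              nlinarith [mul_nonneg (mul_nonneg (mul_nonneg (sq_nonneg (x - 1))
                (sq_nonneg (x - 3))) (by linarith : (0:ℝ) ≤ x - 1))
                (by linarith : (0:ℝ) ≤ 9 - x)]
            · rw [hvertex]
              nlinarith [mul_nonneg (mul_nonneg (by linarith : (0:ℝ) ≤ x)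
                (pow_nonneg (by linarith : (0:ℝ) ≤ x - 1) 3)) (sq_nonneg (x - 3))]
          obtain ⟨t, ht, hft⟩ := intermediate_value_uIcc ((fDiag_cont x).continuousOn) hends
          rw [Set.uIcc_of_le (arccos_nonneg Cs)] at ht
          obtain ⟨ht0, ht1⟩ := ht
          have htpi : t ≤ π := le_trans ht1 (arccos_le_pi Cs)
          refine ⟨t, ⟨by linarith, htpi⟩, t, ⟨by linarith, htpi⟩, ?_⟩
          rw [rep, sub_self, cos_zero]
          exact hft
        · -- x ∈ [15/4, 4] : diagonal family between t = 0 and t = π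
          have ha : (0:ℝ) ≤ x - 15/4 := by linarith
          have hb : (0:ℝ) ≤ 4 - x := by linarith
          have hends : (0:ℝ) ∈ Set.uIcc (fDiag x 0) (fDiag x π) := by
            rw [Set.mem_uIcc]
            left
            constructor
            · rw [fDiag_zero]
              nlinarith [mul_nonneg (mul_nonneg (mul_nonneg (sq_nonneg (x - 1))
                (sq_nonneg (x - 3))) (by linarith : (0:ℝ) ≤ x - 1))
                (by linarith : (0:ℝ) ≤ 9 - x)]
            · rw [fDiag_pi]
              nlinarith [mul_nonneg (mul_nonneg ha ha) hb,
                mul_nonneg (mul_nonneg (mul_nonneg ha ha) ha) hb,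
                mul_nonneg (mul_nonneg (mul_nonneg (mul_nonneg ha ha) ha) ha) hb,
                mul_nonneg (mul_nonneg (mul_nonneg (mul_nonneg (mul_nonneg ha ha) ha) ha) ha) hb,
                mul_nonneg ha hb]
          obtain ⟨t, ht, hft⟩ := intermediate_value_uIcc ((fDiag_cont x).continuousOn) hends
          rw [Set.uIcc_of_le hπ.le] at ht
          obtain ⟨ht0, ht1⟩ := ht
          refine ⟨t, ⟨by linarith, ht1⟩, t, ⟨by linarith, ht1⟩, ?_⟩
          rw [rep, sub_self, cos_zero]
          exact hft
      · -- x ∈ [4, 9] : anti-diagonal family between t = 0 and t = 2π/3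
        have hends : (0:ℝ) ∈ Set.uIcc (fAnti x 0) (fAnti x (2 * π / 3)) := by
          rw [Set.mem_uIcc]
          left
          constructor
          · rw [fAnti_zero]
            nlinarith [mul_nonneg (mul_nonneg (mul_nonneg (sq_nonneg (x - 1))
              (sq_nonneg (x - 3))) (by linarith : (0:ℝ) ≤ x - 1))
              (by linarith : (0:ℝ) ≤ 9 - x)]
          · rw [fAnti_twothirds]
            nlinarith [mul_nonneg (mul_nonneg (by linarith : (0:ℝ) ≤ x)
              (by linarith : (0:ℝ) ≤ x - 4)) (sq_nonneg (x ^ 2 - 7 * x + 3))]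
        obtain ⟨t, ht, hft⟩ := intermediate_value_uIcc ((fAnti_cont x).continuousOn) hends
        rw [Set.uIcc_of_le (by positivity)] at ht
        obtain ⟨ht0, ht1⟩ := ht
        refine ⟨t, ⟨by linarith, by linarith⟩, -t, ⟨by linarith, by linarith⟩, ?_⟩
        rw [rep, cos_neg, show t - -t = 2 * t by ring, cos_two_mul]
        exact hft
end

section
/- For all real numbers θ₁ and θ₂, ω₁ − 2ω₃ − 190ω₂ + 191 ≥ 0. -/
open Real

lemma rhombi_aux (c e : ℝ) (hc1 : -1 ≤ c) (hc2 : c ≤ 1) (he1 : -1 ≤ e) (he2 : e ≤ 1) :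
    ((2*e^2-1) + (2*c^2-1))/2 * (2*c^2-1)
      - 2 * ((e + (4*c^3 - 3*c))/2 * e)
      - 190 * ((e + c)/2 * c) + 191 ≥ 0 := by
  nlinarith [mul_nonneg (mul_nonneg (by linarith : (0:ℝ) ≤ 1 - c) (by linarith : (0:ℝ) ≤ 1 + c))
      (mul_nonneg (by linarith : (0:ℝ) ≤ 1 - e) (by linarith : (0:ℝ) ≤ 1 + e)),
    mul_nonneg (mul_nonneg (by linarith : (0:ℝ) ≤ 1 - c) (by linarith : (0:ℝ) ≤ 1 + c))
      (by nlinarith : (0:ℝ) ≤ 49 - c^2),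
    mul_nonneg (by nlinarith [sq_nonneg (c - e)] : (0:ℝ) ≤ 1 - c*e)
      (by positivity : (0:ℝ) ≤ c^2 + 23)]

theorem rhombitrihexagonal_ineq_M1 (θ₁ θ₂ : ℝ) :
    cos θ₁ * cos θ₂ * cos (θ₁ + θ₂)
      - 2 * (cos ((2 * θ₁ + θ₂) / 2) * cos ((θ₂ - θ₁) / 2) * cos ((θ₁ + 2 * θ₂) / 2))
      - 190 * (cos (θ₁ / 2) * cos (θ₂ / 2) * cos ((θ₁ + θ₂) / 2)) + 191 ≥ 0 := by
  set c : ℝ := cos ((θ₁ + θ₂) / 2) with hc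
  set e : ℝ := cos ((θ₁ - θ₂) / 2) with he
  have hmul : ∀ x y : ℝ, cos x * cos y = (cos (x - y) + cos (x + y)) / 2 := by
    intro x y; rw [cos_sub, cos_add]; ring
  have h1 : cos θ₁ * cos θ₂ = ((2*e^2-1) + (2*c^2-1)) / 2 := by
    rw [hmul]
    have a1 : θ₁ - θ₂ = 2 * ((θ₁ - θ₂)/2) := by ring
    have a2 : θ₁ + θ₂ = 2 * ((θ₁ + θ₂)/2) := by ring
    rw [a1, a2, cos_two_mul, cos_two_mul, ← hc, ← he]
  have h2 : cos (θ₁ + θ₂) = 2*c^2 - 1 := by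
    have a2 : θ₁ + θ₂ = 2 * ((θ₁ + θ₂)/2) := by ring
    rw [a2, cos_two_mul, ← hc]
  have h3 : cos ((2 * θ₁ + θ₂) / 2) * cos ((θ₁ + 2 * θ₂) / 2) = (e + (4*c^3 - 3*c)) / 2 := by
    rw [hmul]
    have a1 : (2 * θ₁ + θ₂) / 2 - (θ₁ + 2 * θ₂) / 2 = (θ₁ - θ₂)/2 := by ring
    have a2 : (2 * θ₁ + θ₂) / 2 + (θ₁ + 2 * θ₂) / 2 = 3 * ((θ₁ + θ₂)/2) := by ring
    rw [a1, a2, cos_three_mul, ← hc, ← he]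
  have h4 : cos ((θ₂ - θ₁) / 2) = e := by
    have a1 : (θ₂ - θ₁) / 2 = -((θ₁ - θ₂)/2) := by ring
    rw [a1, cos_neg, ← he]
  have h5 : cos (θ₁ / 2) * cos (θ₂ / 2) = (e + c) / 2 := by
    rw [hmul]
    have a1 : θ₁/2 - θ₂/2 = (θ₁ - θ₂)/2 := by ring
    have a2 : θ₁/2 + θ₂/2 = (θ₁ + θ₂)/2 := by ring
    rw [a1, a2, ← hc, ← he]
  have key := rhombi_aux c e (neg_one_le_cos _) (cos_le_one _) (neg_one_le_cos _) (cos_le_one _)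
  calc cos θ₁ * cos θ₂ * cos (θ₁ + θ₂)
      - 2 * (cos ((2 * θ₁ + θ₂) / 2) * cos ((θ₂ - θ₁) / 2) * cos ((θ₁ + 2 * θ₂) / 2))
      - 190 * (cos (θ₁ / 2) * cos (θ₂ / 2) * cos ((θ₁ + θ₂) / 2)) + 191
      = ((2*e^2-1) + (2*c^2-1))/2 * (2*c^2-1)
        - 2 * ((e + (4*c^3 - 3*c))/2 * e)
        - 190 * ((e + c)/2 * c) + 191 := by
        rw [h1, h2, h4, h5, mul_right_comm, h3]
    _ ≥ 0 := key
end

section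
/- For all real numbers θ₁ and θ₂, 8ω₁ − 16ω₃ + 160ω₂ + 37 ≥ 0. -/
open Real

theorem rhombitrihexagonal_ineq_M2 (θ₁ θ₂ : ℝ) :
    8 * (cos θ₁ * cos θ₂ * cos (θ₁ + θ₂))
      - 16 * (cos ((2 * θ₁ + θ₂) / 2) * cos ((θ₂ - θ₁) / 2) * cos ((θ₁ + 2 * θ₂) / 2))
      + 160 * (cos (θ₁ / 2) * cos (θ₂ / 2) * cos ((θ₁ + θ₂) / 2)) + 37 ≥ 0 := by
  obtain ⟨a, b, rfl, rfl⟩ : ∃ a b, θ₁ = 2 * a ∧ θ₂ = 2 * b :=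
    ⟨θ₁ / 2, θ₂ / 2, by ring, by ring⟩
  have h1 : cos a ^ 2 + sin a ^ 2 = 1 := cos_sq_add_sin_sq a
  have h2 : cos b ^ 2 + sin b ^ 2 = 1 := cos_sq_add_sin_sq b
  have hp : (cos a * cos b - sin a * sin b) ^ 2 ≤ 1 := by
    rw [← cos_add]; exact cos_sq_le_one _
  have hq : (cos a * cos b + sin a * sin b) ^ 2 ≤ 1 := by
    rw [← cos_sub]; exact cos_sq_le_one _
  have key : ∀ p q : ℝ, p ^ 2 ≤ 1 → q ^ 2 ≤ 1 →
      16*p^2*(p-q)^2 + 56*p^2 - 16*q^2 + 104*p*q + 45 ≥ 0 := by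
    intro p q hp hq
    nlinarith [sq_nonneg (2*p+q), sq_nonneg (2*p*q+1), sq_nonneg (p+q), sq_nonneg (p-q),
      sq_nonneg (2*p+1), sq_nonneg (2*p-1), sq_nonneg (q-1), sq_nonneg (q+1),
      mul_nonneg (sub_nonneg.2 hq) (sub_nonneg.2 hp), sq_nonneg (p*q+1), sq_nonneg (p*q-1)]
  have hF := key (cos a * cos b - sin a * sin b) (cos a * cos b + sin a * sin b) hp hq
  have hid : 8 * (cos (2 * a) * cos (2 * b) * cos (2 * a + 2 * b))
      - 16 * (cos ((2 * (2 * a) + 2 * b) / 2) * cos ((2 * b - 2 * a) / 2) * cos ((2 * a + 2 * (2 * b)) / 2))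
      + 160 * (cos (2 * a / 2) * cos (2 * b / 2) * cos ((2 * a + 2 * b) / 2)) + 37
      = 16*(cos a * cos b - sin a * sin b)^2*((cos a * cos b - sin a * sin b)-(cos a * cos b + sin a * sin b))^2
        + 56*(cos a * cos b - sin a * sin b)^2 - 16*(cos a * cos b + sin a * sin b)^2
        + 104*(cos a * cos b - sin a * sin b)*(cos a * cos b + sin a * sin b) + 45 := by
    rw [show (2 * (2 * a) + 2 * b) / 2 = (a + b) + a by ring,
        show (2 * b - 2 * a) / 2 = b - a by ring,
        show (2 * a + 2 * (2 * b)) / 2 = (a + b) + b by ring,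
        show 2 * a / 2 = a by ring, show 2 * b / 2 = b by ring,
        show 2 * a + 2 * b = 2 * (a + b) by ring,
        show 2 * (a + b) / 2 = a + b by ring]
    simp only [cos_two_mul, cos_add, sin_add, cos_sub]
    linear_combination
      (80*sin b^2 - 64*sin b^4 - 64*cos b^2*sin b^2 - 64*sin a^2*sin b^4
        - 32*sin a^2*cos b^2*sin b^2 + 48*cos a*sin a*cos b*sin b^3
        - 16*cos a*sin a*cos b^3*sin b - 32*cos a^2*sin b^2 + 32*cos a^2*sin b^4
        + 16*cos a^2*cos b^2*sin b^2 + 16*cos a^2*cos b^4) * h1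
      + (16 - 64*sin b^2 + 48*cos a*sin a*cos b*sin b - 16*cos a^2 + 96*cos a^2*sin b^2
        - 16*cos a^2*cos b^2 - 64*cos a^3*sin a*cos b*sin b - 32*cos a^4*sin b^2
        + 32*cos a^4*cos b^2) * h2
  rw [hid]
  exact hF
end

section
/- For all real numbers θ₁ and θ₂, ω₁ − 14ω₃ − 826ω₂ + 839 ≥ 0. -/
open Real

private lemma ptc (x y : ℝ) : cos x * cos y = (cos (x+y) + cos (x-y))/2 := by
  linear_combination (-(cos_add x y) - cos_sub x y)/2

theorem snub_trihexagonal_ineq_M3 (θ₁ θ₂ : ℝ) :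
    cos θ₁ * cos θ₂ * cos (θ₁ + θ₂)
      - 14 * (cos ((2 * θ₁ + θ₂) / 2) * cos ((θ₂ - θ₁) / 2) * cos ((θ₁ + 2 * θ₂) / 2))
      - 826 * (cos (θ₁ / 2) * cos (θ₂ / 2) * cos ((θ₁ + θ₂) / 2)) + 839 ≥ 0 := by
  obtain ⟨a, rfl⟩ : ∃ a, θ₁ = 2*a := ⟨θ₁/2, by ring⟩
  obtain ⟨b, rfl⟩ : ∃ b, θ₂ = 2*b := ⟨θ₂/2, by ring⟩
  set s := cos (a+b) with hs
  set d := cos (a-b) with hd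
  have hA : cos (2*a) * cos (2*b) * cos (2*a+2*b) = (s^2+d^2-1)*(2*s^2-1) := by
    rw [ptc (2*a) (2*b), show (2*a+2*b:ℝ) = 2*(a+b) by ring,
        show (2*a-2*b:ℝ) = 2*(a-b) by ring, cos_two_mul (a+b), cos_two_mul (a-b), ← hs, ← hd]
    ring
  have hB : cos (2*a/2) * cos (2*b/2) * cos ((2*a+2*b)/2) = s*(s+d)/2 := by
    rw [show (2*a/2:ℝ) = a by ring, show (2*b/2:ℝ) = b by ring,
        show ((2*a+2*b)/2:ℝ) = a+b by ring, ptc a b, ← hs, ← hd]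
    ring
  have hC : cos ((2*(2*a)+2*b)/2) * cos ((2*b-2*a)/2) * cos ((2*a+2*(2*b))/2)
      = d*(d + 4*s^3 - 3*s)/2 := by
    rw [show ((2*(2*a)+2*b)/2:ℝ) = 2*a+b by ring, show ((2*a+2*(2*b))/2:ℝ) = a+2*b by ring,
        show ((2*b-2*a)/2:ℝ) = -(a-b) by ring, cos_neg, ← hd]
    have h1 : cos (2*a+b) * cos (a+2*b) = (4*s^3-3*s + d)/2 := by
      rw [ptc (2*a+b) (a+2*b), show (2*a+b+(a+2*b):ℝ) = 3*(a+b) by ring,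
          show (2*a+b-(a+2*b):ℝ) = a-b by ring, cos_three_mul (a+b), ← hs, ← hd]
    linear_combination d * h1
  rw [hA, hB, hC]
  have hs1 : s^2 ≤ 1 := cos_sq_le_one (a+b)
  have hd1 : d^2 ≤ 1 := cos_sq_le_one (a-b)
  have hsd : s*d ≤ 1 := by nlinarith [sq_nonneg (s-d), sq_nonneg (s+d)]
  nlinarith [sq_nonneg (s*(s-d)), mul_nonneg (sq_nonneg s) (by linarith : (0:ℝ) ≤ 1 - s*d),
    hs1, hd1, hsd]
end

section
/- For all real numbers θ₁ and θ₂, 8ω₁ + 16(√3 − 1)ω₃ + 16(1 + 3√3)ω₂ − 10√3 + 19 ≥ 0. -/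
open Real

private lemma coscos (p q : ℝ) : cos p * cos q = (cos (p+q) + cos (p-q))/2 := by
  rw [cos_add, cos_sub]; ring

private lemma key_M4 (s a b : ℝ) (hs : s^2=3) (hs1 : 1 ≤ s) (ha : a^2 ≤ 1) (hb : b^2 ≤ 1) :
    16*a^4+16*a^2*b^2+32*(s-1)*a^3*b+(24*s-16)*a^2+(8*s-16)*b^2+32*a*b+27-10*s ≥ 0 := by
  nlinarith [sq_nonneg (2*a+b), sq_nonneg (4*a^2-1), sq_nonneg (2*a*b+1),
    sq_nonneg (a*(2*a+b)), sq_nonneg (b*(2*a+b)), sq_nonneg (4*a^2-1+s*(2*a*b+1)),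
    sq_nonneg (4*a^2-1+(2*a*b+1)), sq_nonneg (4*a^2-1-(2*a*b+1)),
    mul_nonneg (sub_nonneg.2 hb) (sq_nonneg a), mul_nonneg (sub_nonneg.2 hb) (sq_nonneg (2*a+b)),
    mul_nonneg (sub_nonneg.2 hb) (sub_nonneg.2 ha), sub_nonneg.2 hb, sub_nonneg.2 ha,
    mul_nonneg (sub_nonneg.2 hb) (sq_nonneg b), sq_nonneg (s-1)]

theorem snub_trihexagonal_ineq_M4 (θ₁ θ₂ : ℝ) :
    8 * (cos θ₁ * cos θ₂ * cos (θ₁ + θ₂))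
      + 16 * (Real.sqrt 3 - 1)
          * (cos ((2 * θ₁ + θ₂) / 2) * cos ((θ₂ - θ₁) / 2) * cos ((θ₁ + 2 * θ₂) / 2))
      + 16 * (1 + 3 * Real.sqrt 3)
          * (cos (θ₁ / 2) * cos (θ₂ / 2) * cos ((θ₁ + θ₂) / 2))
      - 10 * Real.sqrt 3 + 19 ≥ 0 := by
  set a : ℝ := cos ((θ₁ + θ₂)/2) with hadef
  set b : ℝ := cos ((θ₁ - θ₂)/2) with hbdef
  have h2m : cos (θ₁ + θ₂) = 2*a^2 - 1 := by
    have h := cos_two_mul ((θ₁+θ₂)/2)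
    rw [show 2*((θ₁+θ₂)/2) = θ₁+θ₂ by ring] at h
    rw [h, hadef]
  have h2e : cos (θ₁ - θ₂) = 2*b^2 - 1 := by
    have h := cos_two_mul ((θ₁-θ₂)/2)
    rw [show 2*((θ₁-θ₂)/2) = θ₁-θ₂ by ring] at h
    rw [h, hbdef]
  have w1 : cos θ₁ * cos θ₂ * cos (θ₁ + θ₂) = (2*a^2-1)*(a^2+b^2-1) := by
    rw [coscos θ₁ θ₂, h2m, h2e]; ring
  have w2 : cos (θ₁ / 2) * cos (θ₂ / 2) * cos ((θ₁ + θ₂) / 2) = a*(a+b)/2 := by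
    rw [coscos (θ₁/2) (θ₂/2), show θ₁/2 + θ₂/2 = (θ₁+θ₂)/2 by ring,
      show θ₁/2 - θ₂/2 = (θ₁-θ₂)/2 by ring, ← hadef, ← hbdef]; ring
  have w3 : cos ((2 * θ₁ + θ₂) / 2) * cos ((θ₂ - θ₁) / 2) * cos ((θ₁ + 2 * θ₂) / 2)
      = b*(4*a^3-3*a+b)/2 := by
    have hb' : cos ((θ₂ - θ₁)/2) = b := by
      rw [hbdef, show (θ₂ - θ₁)/2 = -((θ₁-θ₂)/2) by ring, cos_neg]
    have h3 : cos ((2*θ₁+θ₂)/2) * cos ((θ₁+2*θ₂)/2) = (4*a^3-3*a+b)/2 := by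
      rw [coscos, show (2*θ₁+θ₂)/2 + (θ₁+2*θ₂)/2 = 3*((θ₁+θ₂)/2) by ring,
        show (2*θ₁+θ₂)/2 - (θ₁+2*θ₂)/2 = (θ₁-θ₂)/2 by ring, cos_three_mul]
    calc cos ((2 * θ₁ + θ₂) / 2) * cos ((θ₂ - θ₁) / 2) * cos ((θ₁ + 2 * θ₂) / 2)
        = (cos ((2*θ₁+θ₂)/2) * cos ((θ₁+2*θ₂)/2)) * cos ((θ₂ - θ₁)/2) := by ring
      _ = b*(4*a^3-3*a+b)/2 := by rw [h3, hb']; ring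
  rw [w1, w2, w3]
  have hs : Real.sqrt 3 ^ 2 = 3 := Real.sq_sqrt (by norm_num)
  have hs1 : 1 ≤ Real.sqrt 3 := by nlinarith [Real.sqrt_nonneg 3]
  have := key_M4 (Real.sqrt 3) a b hs hs1 (cos_sq_le_one _) (cos_sq_le_one _)
  nlinarith [this]
end

section
/- For all real numbers θ₁ and θ₂, 8ω̃₁ − 272ω̃₃ − 17648ω̃₂ + 17912 ≥ 0. -/
open Real

theorem truncated_trihexagonal_ineq_M5 (θ₁ θ₂ : ℝ) :
    8 * (cos θ₁ * cos θ₂ * cos (θ₁ - θ₂))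
      - 272 * (cos ((2 * θ₁ - θ₂) / 2) * cos ((θ₁ + θ₂) / 2) * cos ((θ₁ - 2 * θ₂) / 2))
      - 17648 * (cos (θ₁ / 2) * cos (θ₂ / 2) * cos ((θ₁ - θ₂) / 2)) + 17912 ≥ 0 := by
  set u := cos ((θ₁ - θ₂) / 2) with hu
  set v := cos ((θ₁ + θ₂) / 2) with hv
  have hpq : ∀ A B : ℝ, cos A * cos B = (cos (A - B) + cos (A + B)) / 2 := by
    intro A B; rw [cos_sub, cos_add]; ring
  have e1 : cos (θ₁ - θ₂) = 2 * u ^ 2 - 1 := by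
    rw [show θ₁ - θ₂ = 2 * ((θ₁ - θ₂) / 2) by ring, cos_two_mul]
  have e2 : cos (θ₁ + θ₂) = 2 * v ^ 2 - 1 := by
    rw [show θ₁ + θ₂ = 2 * ((θ₁ + θ₂) / 2) by ring, cos_two_mul]
  have h1 : cos θ₁ * cos θ₂ * cos (θ₁ - θ₂)
      = ((2 * u ^ 2 - 1) + (2 * v ^ 2 - 1)) / 2 * (2 * u ^ 2 - 1) := by
    rw [hpq θ₁ θ₂, e1, e2]
  have h3 : cos ((2 * θ₁ - θ₂) / 2) * cos ((θ₁ + θ₂) / 2) * cos ((θ₁ - 2 * θ₂) / 2)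
      = (v + (4 * u ^ 3 - 3 * u)) / 2 * v := by
    have h := hpq ((2 * θ₁ - θ₂) / 2) ((θ₁ - 2 * θ₂) / 2)
    rw [show (2 * θ₁ - θ₂) / 2 - (θ₁ - 2 * θ₂) / 2 = (θ₁ + θ₂) / 2 by ring,
        show (2 * θ₁ - θ₂) / 2 + (θ₁ - 2 * θ₂) / 2 = 3 * ((θ₁ - θ₂) / 2) by ring,
        cos_three_mul] at h
    calc cos ((2 * θ₁ - θ₂) / 2) * cos ((θ₁ + θ₂) / 2) * cos ((θ₁ - 2 * θ₂) / 2)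
        = cos ((2 * θ₁ - θ₂) / 2) * cos ((θ₁ - 2 * θ₂) / 2) * v := by ring
      _ = (v + (4 * u ^ 3 - 3 * u)) / 2 * v := by rw [h]
  have h2 : cos (θ₁ / 2) * cos (θ₂ / 2) * cos ((θ₁ - θ₂) / 2) = (u + v) / 2 * u := by
    have h := hpq (θ₁ / 2) (θ₂ / 2)
    rw [show θ₁ / 2 - θ₂ / 2 = (θ₁ - θ₂) / 2 by ring,
        show θ₁ / 2 + θ₂ / 2 = (θ₁ + θ₂) / 2 by ring] at h
    rw [h]
  rw [h1, h2, h3]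
  have hu1 : -1 ≤ u := neg_one_le_cos _
  have hu2 : u ≤ 1 := cos_le_one _
  have hv1 : -1 ≤ v := neg_one_le_cos _
  have hv2 : v ≤ 1 := cos_le_one _
  have t1 : 0 ≤ 1 - u ^ 2 := by nlinarith
  have t3 : 0 ≤ 1 - v ^ 2 := by nlinarith
  have t2 : 0 ≤ 1 - u * v := by nlinarith [mul_nonneg (by linarith : (0:ℝ) ≤ 1 - u) (by linarith : (0:ℝ) ≤ 1 + v), mul_nonneg (by linarith : (0:ℝ) ≤ 1 + u) (by linarith : (0:ℝ) ≤ 1 - v)]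
  have t4 : 0 ≤ (u - v) ^ 2 * u ^ 2 := mul_nonneg (sq_nonneg _) (sq_nonneg _)
  have t5 : 0 ≤ (1 - u * v) * u ^ 2 := mul_nonneg t2 (sq_nonneg _)
  nlinarith [t1, t2, t3, t4, t5]
end

section
/- For all real numbers θ₁ and θ₂, 8ω̃₁ + 16ω̃₃ + 64ω̃₂ − 7 ≥ 0. -/
open Real

theorem truncated_trihexagonal_ineq_M6 (θ₁ θ₂ : ℝ) :
    8 * (cos θ₁ * cos θ₂ * cos (θ₁ - θ₂))
      + 16 * (cos ((2 * θ₁ - θ₂) / 2) * cos ((θ₁ + θ₂) / 2) * cos ((θ₁ - 2 * θ₂) / 2))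
      + 64 * (cos (θ₁ / 2) * cos (θ₂ / 2) * cos ((θ₁ - θ₂) / 2)) - 7 ≥ 0 := by
  have h1 := sin_sq_add_cos_sq (θ₁ / 2)
  have h2 := sin_sq_add_cos_sq (θ₂ / 2)
  set c1 := cos (θ₁ / 2) with hc1
  set s1 := sin (θ₁ / 2) with hs1
  set c2 := cos (θ₂ / 2) with hs2
  set s2 := sin (θ₂ / 2) with hc2
  have e1 : cos θ₁ = 2 * c1 ^ 2 - 1 := by
    have := cos_two_mul (θ₁ / 2)
    rw [show 2 * (θ₁ / 2) = θ₁ by ring] at this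
    linarith
  have e2 : cos θ₂ = 2 * c2 ^ 2 - 1 := by
    have := cos_two_mul (θ₂ / 2)
    rw [show 2 * (θ₂ / 2) = θ₂ by ring] at this
    linarith
  have e3 : cos (θ₁ - θ₂) = 2 * (c1 * c2 + s1 * s2) ^ 2 - 1 := by
    have := cos_two_mul (θ₁ / 2 - θ₂ / 2)
    rw [cos_sub, show 2 * (θ₁ / 2 - θ₂ / 2) = θ₁ - θ₂ by ring] at this
    linarith
  have e4 : cos ((2 * θ₁ - θ₂) / 2) =
      c1 * (c1 * c2 + s1 * s2) - s1 * (s1 * c2 - c1 * s2) := by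
    rw [show (2 * θ₁ - θ₂) / 2 = θ₁ / 2 + (θ₁ / 2 - θ₂ / 2) by ring, cos_add, cos_sub,
      sin_sub]
  have e5 : cos ((θ₁ + θ₂) / 2) = c1 * c2 - s1 * s2 := by
    rw [show (θ₁ + θ₂) / 2 = θ₁ / 2 + θ₂ / 2 by ring, cos_add]
  have e6 : cos ((θ₁ - 2 * θ₂) / 2) =
      (c1 * c2 + s1 * s2) * c2 + (s1 * c2 - c1 * s2) * s2 := by
    rw [show (θ₁ - 2 * θ₂) / 2 = (θ₁ / 2 - θ₂ / 2) - θ₂ / 2 by ring, cos_sub, cos_sub,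
      sin_sub]
  have e7 : cos ((θ₁ - θ₂) / 2) = c1 * c2 + s1 * s2 := by
    rw [show (θ₁ - θ₂) / 2 = θ₁ / 2 - θ₂ / 2 by ring, cos_sub]
  rw [e1, e2, e3, e4, e5, e6, e7]
  have key : 8 * ((2 * c1 ^ 2 - 1) * (2 * c2 ^ 2 - 1) * (2 * (c1 * c2 + s1 * s2) ^ 2 - 1))
      + 16 * ((c1 * (c1 * c2 + s1 * s2) - s1 * (s1 * c2 - c1 * s2)) * (c1 * c2 - s1 * s2) *
          ((c1 * c2 + s1 * s2) * c2 + (s1 * c2 - c1 * s2) * s2))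
      + 64 * (c1 * c2 * (c1 * c2 + s1 * s2)) - 7
      = (8 * c1 * c2 * (c1 * c2 + s1 * s2) + 1) ^ 2 := by
    linear_combination (16 * s2 ^ 2 + 32 * s1 ^ 2 * c2 ^ 2 * s2 ^ 2
        - 80 * c1 * s1 * c2 * s2 ^ 3 - 16 * c1 * s1 * c2 ^ 3 * s2
        - 32 * c1 ^ 2 * s2 ^ 2 + 32 * c1 ^ 2 * s2 ^ 4
        - 16 * c1 ^ 2 * c2 ^ 2 * s2 ^ 2 - 16 * c1 ^ 2 * c2 ^ 4) * h1
      + (16 - 80 * c1 * s1 * c2 * s2 - 16 * c1 ^ 2 + 32 * c1 ^ 2 * s2 ^ 2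
        - 48 * c1 ^ 2 * c2 ^ 2 + 64 * c1 ^ 3 * s1 * c2 * s2
        - 32 * c1 ^ 4 * s2 ^ 2 + 32 * c1 ^ 4 * c2 ^ 2) * h2
  rw [key]
  positivity
end

section
/- For every real number y with 0 ≤ y ≤ 2, one has 6y² + 36y + 27 ≤ (8y + 9)^{3/2}; equivalently, the function h(y) = 6y² + 36y + 27 − (8y + 9)√(8y + 9) has maximum value 0 on [0, 2], attained at y = 0. -/
open Real

theorem snub_trihexagonal_key_ineq :
    (∀ y : ℝ, 0 ≤ y → y ≤ 2 →
      6 * y ^ 2 + 36 * y + 27 ≤ (8 * y + 9) * Real.sqrt (8 * y + 9))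
    ∧ 6 * (0 : ℝ) ^ 2 + 36 * 0 + 27 = (8 * 0 + 9) * Real.sqrt (8 * 0 + 9) := by
  constructor
  · intro y hy0 hy2
    have hpos : (0:ℝ) ≤ 8 * y + 9 := by linarith
    set s := Real.sqrt (8 * y + 9) with hs
    have hs2 : s ^ 2 = 8 * y + 9 := Real.sq_sqrt hpos
    have hsn : 0 ≤ s := Real.sqrt_nonneg _
    have hs3 : 3 ≤ s := by
      nlinarith [hs2, hsn]
    nlinarith [sq_nonneg (s - 3), sq_nonneg (s^2 - 3*s), mul_nonneg hy0 hy0, sq_nonneg (s*y), sq_nonneg (s - 3 - y)]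
  · have : Real.sqrt (8 * 0 + 9) = 3 := by
      rw [show (8:ℝ) * 0 + 9 = 3 ^ 2 by norm_num, Real.sqrt_sq (by norm_num)]
    rw [this]; norm_num
end

section
/- For every real number t with 0 ≤ t ≤ 1, one has 2t² + 27t + 54 ≤ 2(3t + 9)^{3/2}; equivalently, the function g(t) = 2t² + 27t + 54 − 2(3t + 9)^{3/2} has maximum value 0 on [0, 1], attained at t = 0. -/
open Real

theorem truncated_trihexagonal_key_ineq :
    (∀ t : ℝ, 0 ≤ t → t ≤ 1 →
      2 * t ^ 2 + 27 * t + 54 ≤ 2 * ((3 * t + 9) * Real.sqrt (3 * t + 9)))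
    ∧ 2 * (0 : ℝ) ^ 2 + 27 * 0 + 54 = 2 * ((3 * 0 + 9) * Real.sqrt (3 * 0 + 9)) := by
  have h9 : Real.sqrt 9 = 3 := by
    rw [show (9:ℝ) = 3^2 by norm_num, Real.sqrt_sq (by norm_num)]
  constructor
  · intro t ht0 ht1
    set s := Real.sqrt (3 * t + 9) with hs
    have hnn : (0:ℝ) ≤ 3 * t + 9 := by linarith
    have hsq : s ^ 2 = 3 * t + 9 := Real.sq_sqrt hnn
    have hs3 : 3 ≤ s := by
      calc (3:ℝ) = Real.sqrt 9 := h9.symm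
        _ ≤ s := Real.sqrt_le_sqrt (by linarith)
    have hsub : s ^ 2 ≤ 12 := by rw [hsq]; linarith
    nlinarith [sq_nonneg (s - 3), mul_nonneg (sq_nonneg (s-3)) (by linarith : (0:ℝ) ≤ s - 3), sq_nonneg s]
  · norm_num [h9]
end

section
/- For every real number t with −1 < t < 1 and all real numbers θ₁, θ₂, one has t⁶ − 6t⁵ − 9t⁴ + (60 − 48ω̃₂)t³ + (63 − 48ω̃₂)t² + (144ω̃₂ − 32ω̃₃ − 118)t + 8ω̃₁ − 48ω̃₃ + 160ω̃₂ − 127 < 0. -/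
open Real

/-- Purely algebraic core inequality: with `a,b,sa,sb` playing the roles of
`cos (θ₁/2), cos (θ₂/2), sin (θ₁/2), sin (θ₂/2)`. -/
lemma truncated_trihexagonal_gap_alg (t a b sa sb : ℝ) (ht₁ : -1 < t) (ht₂ : t < 1)
    (hsa : sa ^ 2 = 1 - a ^ 2) (hsb : sb ^ 2 = 1 - b ^ 2) :
    t ^ 6 - 6 * t ^ 5 - 9 * t ^ 4
      + (60 - 48 * (a * b * (a * b + sa * sb))) * t ^ 3
      + (63 - 48 * (a * b * (a * b + sa * sb))) * t ^ 2
      + (144 * (a * b * (a * b + sa * sb))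
          - 32 * (((2 * a ^ 2 - 1) * b + 2 * sa * a * sb) * (a * b - sa * sb)
              * (a * (2 * b ^ 2 - 1) + 2 * sb * b * sa))
          - 118) * t
      + 8 * ((2 * a ^ 2 - 1) * (2 * b ^ 2 - 1)
          * ((2 * a ^ 2 - 1) * (2 * b ^ 2 - 1) + 2 * sa * a * (2 * sb * b)))
      - 48 * (((2 * a ^ 2 - 1) * b + 2 * sa * a * sb) * (a * b - sa * sb)
          * (a * (2 * b ^ 2 - 1) + 2 * sb * b * sa))
      + 160 * (a * b * (a * b + sa * sb)) - 127 < 0 := by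
  have ha2 : a ^ 2 ≤ 1 := by nlinarith [sq_nonneg sa]
  have hb2 : b ^ 2 ≤ 1 := by nlinarith [sq_nonneg sb]
  have hc2 : (a * b + sa * sb) ^ 2 + (a * sb - sa * b) ^ 2 = 1 := by
    linear_combination (b ^ 2 + sb ^ 2) * hsa + hsb
  have h1 : a ^ 2 * b ^ 2 ≤ 1 := by nlinarith [sq_nonneg a, sq_nonneg b]
  have h2 : (a * b + sa * sb) ^ 2 ≤ 1 := by nlinarith [sq_nonneg (a * sb - sa * b)]
  have h3 : (a * b * (a * b + sa * sb)) ^ 2 ≤ 1 := by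
    nlinarith [sq_nonneg (a * b), sq_nonneg (a * b + sa * sb)]
  have hm : a * b * (a * b + sa * sb) ≤ 1 := by
    nlinarith [sq_nonneg (a * b * (a * b + sa * sb) - 1)]
  have h1t : 0 < 1 - t ^ 2 := by nlinarith
  have hq : 0 < (t ^ 2 - 1) ^ 2 := by nlinarith [mul_pos h1t h1t]
  have hfirst : (t ^ 2 - 1) ^ 2 * (t - 7) < 0 :=
    mul_neg_of_pos_of_neg hq (by linarith)
  have h112 : 0 ≤ (1 - a * b * (a * b + sa * sb))
      * (112 - 64 * (a * b * (a * b + sa * sb)) - 48 * t ^ 2) :=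
    mul_nonneg (by linarith) (by nlinarith)
  have hinner : (t ^ 2 - 1) ^ 2 * (t - 7)
      - (1 - a * b * (a * b + sa * sb))
        * (112 - 64 * (a * b * (a * b + sa * sb)) - 48 * t ^ 2) < 0 := by linarith
  have hleft : (t + 1) * ((t ^ 2 - 1) ^ 2 * (t - 7)
      - (1 - a * b * (a * b + sa * sb))
        * (112 - 64 * (a * b * (a * b + sa * sb)) - 48 * t ^ 2)) < 0 :=
    mul_neg_of_pos_of_neg (by linarith) hinner
  have hsqr : 0 ≤ 64 * (t + 2) * (sa ^ 2 * sb ^ 2 * (a * sb - sa * b) ^ 2) :=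
    mul_nonneg (by linarith) (by positivity)
  have keyid : t ^ 6 - 6 * t ^ 5 - 9 * t ^ 4
      + (60 - 48 * (a * b * (a * b + sa * sb))) * t ^ 3
      + (63 - 48 * (a * b * (a * b + sa * sb))) * t ^ 2
      + (144 * (a * b * (a * b + sa * sb))
          - 32 * (((2 * a ^ 2 - 1) * b + 2 * sa * a * sb) * (a * b - sa * sb)
              * (a * (2 * b ^ 2 - 1) + 2 * sb * b * sa))
          - 118) * t
      + 8 * ((2 * a ^ 2 - 1) * (2 * b ^ 2 - 1)
          * ((2 * a ^ 2 - 1) * (2 * b ^ 2 - 1) + 2 * sa * a * (2 * sb * b)))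
      - 48 * (((2 * a ^ 2 - 1) * b + 2 * sa * a * sb) * (a * b - sa * sb)
          * (a * (2 * b ^ 2 - 1) + 2 * sb * b * sa))
      + 160 * (a * b * (a * b + sa * sb)) - 127
      = (t + 1) * ((t ^ 2 - 1) ^ 2 * (t - 7)
          - (1 - a * b * (a * b + sa * sb))
            * (112 - 64 * (a * b * (a * b + sa * sb)) - 48 * t ^ 2))
        - 64 * (t + 2) * (sa ^ 2 * sb ^ 2 * (a * sb - sa * b) ^ 2) := by
    linear_combination
      (32 * b ^ 2 * sb ^ 2 + 128 * b ^ 2 * sa ^ 2 * sb ^ 2 - 64 * a * b * sa * sb ^ 3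
        - 96 * a ^ 2 * sb ^ 2 + 128 * a ^ 2 * sb ^ 4 + 128 * a ^ 2 * b ^ 2 * sb ^ 2
        + 64 * t * b ^ 2 * sa ^ 2 * sb ^ 2 - 64 * t * a ^ 2 * sb ^ 2 + 64 * t * a ^ 2 * sb ^ 4
        + 128 * t * a ^ 2 * b ^ 2 * sb ^ 2) * hsa
      + (32 * b ^ 2 - 64 * a * b * sa * sb + 32 * a ^ 2 + 128 * a ^ 2 * sb ^ 2
        - 32 * a ^ 2 * b ^ 2 + 64 * a ^ 3 * b * sa * sb - 32 * a ^ 4 - 128 * a ^ 4 * sb ^ 2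
        + 64 * t * a ^ 2 * sb ^ 2 + 64 * t * a ^ 2 * b ^ 2 - 64 * t * a ^ 4 * sb ^ 2
        - 64 * t * a ^ 4 * b ^ 2) * hsb
  rw [keyid]
  linarith

theorem truncated_trihexagonal_gap (t θ₁ θ₂ : ℝ) (ht₁ : -1 < t) (ht₂ : t < 1) :
    t ^ 6 - 6 * t ^ 5 - 9 * t ^ 4
      + (60 - 48 * (cos (θ₁ / 2) * cos (θ₂ / 2) * cos ((θ₁ - θ₂) / 2))) * t ^ 3
      + (63 - 48 * (cos (θ₁ / 2) * cos (θ₂ / 2) * cos ((θ₁ - θ₂) / 2))) * t ^ 2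
      + (144 * (cos (θ₁ / 2) * cos (θ₂ / 2) * cos ((θ₁ - θ₂) / 2))
          - 32 * (cos ((2 * θ₁ - θ₂) / 2) * cos ((θ₁ + θ₂) / 2) * cos ((θ₁ - 2 * θ₂) / 2))
          - 118) * t
      + 8 * (cos θ₁ * cos θ₂ * cos (θ₁ - θ₂))
      - 48 * (cos ((2 * θ₁ - θ₂) / 2) * cos ((θ₁ + θ₂) / 2) * cos ((θ₁ - 2 * θ₂) / 2))
      + 160 * (cos (θ₁ / 2) * cos (θ₂ / 2) * cos ((θ₁ - θ₂) / 2)) - 127 < 0 := by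
  have e2 : cos θ₁ = 2 * cos (θ₁ / 2) ^ 2 - 1 := by
    have h := Real.cos_two_mul (θ₁ / 2); rw [show 2 * (θ₁ / 2) = θ₁ by ring] at h; exact h
  have e3 : cos θ₂ = 2 * cos (θ₂ / 2) ^ 2 - 1 := by
    have h := Real.cos_two_mul (θ₂ / 2); rw [show 2 * (θ₂ / 2) = θ₂ by ring] at h; exact h
  have s1 : sin θ₁ = 2 * sin (θ₁ / 2) * cos (θ₁ / 2) := by
    have h := Real.sin_two_mul (θ₁ / 2); rw [show 2 * (θ₁ / 2) = θ₁ by ring] at h; exact h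
  have s2 : sin θ₂ = 2 * sin (θ₂ / 2) * cos (θ₂ / 2) := by
    have h := Real.sin_two_mul (θ₂ / 2); rw [show 2 * (θ₂ / 2) = θ₂ by ring] at h; exact h
  have e1 : cos ((θ₁ - θ₂) / 2) = cos (θ₁ / 2) * cos (θ₂ / 2) + sin (θ₁ / 2) * sin (θ₂ / 2) := by
    rw [show (θ₁ - θ₂) / 2 = θ₁ / 2 - θ₂ / 2 by ring, Real.cos_sub]
  have e4 : cos (θ₁ - θ₂) = cos θ₁ * cos θ₂ + sin θ₁ * sin θ₂ := Real.cos_sub θ₁ θ₂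
  have e5 : cos ((θ₁ + θ₂) / 2) = cos (θ₁ / 2) * cos (θ₂ / 2) - sin (θ₁ / 2) * sin (θ₂ / 2) := by
    rw [show (θ₁ + θ₂) / 2 = θ₁ / 2 + θ₂ / 2 by ring, Real.cos_add]
  have e6 : cos ((2 * θ₁ - θ₂) / 2) = cos θ₁ * cos (θ₂ / 2) + sin θ₁ * sin (θ₂ / 2) := by
    rw [show (2 * θ₁ - θ₂) / 2 = θ₁ - θ₂ / 2 by ring, Real.cos_sub]
  have e7 : cos ((θ₁ - 2 * θ₂) / 2) = cos (θ₁ / 2) * cos θ₂ + sin (θ₁ / 2) * sin θ₂ := by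
    rw [show (θ₁ - 2 * θ₂) / 2 = θ₁ / 2 - θ₂ by ring, Real.cos_sub]
  rw [e1, e4, e5, e6, e7, e2, e3, s1, s2]
  have hsa : sin (θ₁ / 2) ^ 2 = 1 - cos (θ₁ / 2) ^ 2 := Real.sin_sq (θ₁ / 2)
  have hsb : sin (θ₂ / 2) ^ 2 = 1 - cos (θ₂ / 2) ^ 2 := Real.sin_sq (θ₂ / 2)
  nlinarith [truncated_trihexagonal_gap_alg t (cos (θ₁ / 2)) (cos (θ₂ / 2)) (sin (θ₁ / 2))
    (sin (θ₂ / 2)) ht₁ ht₂ hsa hsb]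
end
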